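/- arXiv:0807.4840 — 5 statements merged into one kernel-verified Lean document; each statement's English description precedes it below -/
import Mathlib

section
/- The number of parking functions of length n equals (n+1)^(n-1). -/
/-- The parking condition: `p : {1,…,n} → {1,…,n}` (encoded as `Fin n → ℕ`) is a parking
function iff for every `j ∈ {1,…,n}` the number of indices `i` with `p i ≤ j` is at
least `j`. -/
def IsParking {n : ℕ} (p : Fin n → ℕ) : Prop :=
  ∀ j ∈ Finset.Icc 1 n, j ≤ (Finset.univ.filter fun i => p i ≤ j).card

instance {n : ℕ} : DecidablePred (IsParking (n := n)) := fun _ =>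
  Finset.decidableDforallFinset

/-- `park(n)`: the set of all parking functions of length `n`, i.e. functions
`p : {1,…,n} → {1,…,n}` satisfying the parking condition. -/
def parkFinset (n : ℕ) : Finset (Fin n → ℕ) :=
  (Fintype.piFinset fun _ => Finset.Icc 1 n).filter IsParking

namespace ParkAux

variable {n : ℕ}

/-- number of cars preferring residue `t % (n+1)` -/
def cnt (f : Fin n → ZMod (n+1)) (t : ℕ) : ℕ :=
  (Finset.univ.filter fun i => (f i).val = t % (n+1)).card

lemma cnt_period (f : Fin n → ZMod (n+1)) (t : ℕ) : cnt f (t + (n+1)) = cnt f t := by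
  simp [cnt, Nat.add_mod_right]

/-- cumulative counts -/
def acc (f : Fin n → ZMod (n+1)) (k : ℕ) : ℕ := ∑ t ∈ Finset.range k, cnt f t

lemma acc_succ (f : Fin n → ZMod (n+1)) (k : ℕ) : acc f (k+1) = acc f k + cnt f k := by
  simp [acc, Finset.sum_range_succ]

lemma acc_mono (f : Fin n → ZMod (n+1)) {k l : ℕ} (h : k ≤ l) : acc f k ≤ acc f l := by
  unfold acc
  exact Finset.sum_le_sum_of_subset (Finset.range_subset_range.2 h)

lemma acc_total (f : Fin n → ZMod (n+1)) : acc f (n+1) = n := by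
  have h := Finset.card_eq_sum_card_fiberwise
      (f := fun i : Fin n => (f i).val) (s := Finset.univ) (t := Finset.range (n+1))
      (fun x _ => Finset.mem_range.2 (ZMod.val_lt _))
  rw [Finset.card_univ, Fintype.card_fin] at h
  rw [acc]
  conv_rhs => rw [h]
  apply Finset.sum_congr rfl
  intro t ht
  rw [cnt, Nat.mod_eq_of_lt (Finset.mem_range.1 ht)]

lemma acc_add_period (f : Fin n → ZMod (n+1)) (k : ℕ) : acc f (k + (n+1)) = acc f k + n := by
  induction k with
  | zero => simpa [acc] using acc_total f
  | succ k ih =>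
      have : k + 1 + (n+1) = (k + (n+1)) + 1 := by ring
      rw [this, acc_succ, ih, cnt_period, acc_succ]
      ring


lemma fiber_eq (f : Fin n → ZMod (n+1)) (c₀ : ZMod (n+1)) {j : ℕ} (hj : j < n + 1) (i : Fin n) :
    (f i - c₀).val = j ↔ (f i).val = (c₀.val + j) % (n+1) := by
  constructor
  · intro h
    have h1 : f i = c₀ + (f i - c₀) := by ring
    rw [h1, ZMod.val_add, h]
  · intro h
    have h1 : f i = ((c₀.val + j : ℕ) : ZMod (n+1)) := by
      rw [← ZMod.natCast_zmod_val (f i), h, ZMod.natCast_mod]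
    have h2 : f i - c₀ = (j : ZMod (n+1)) := by
      rw [h1]
      push_cast
      rw [ZMod.natCast_zmod_val]
      ring
    rw [h2, ZMod.val_cast_of_lt hj]

/-- counting cars in a cyclic window of length `j` starting at `c₀` -/
lemma count_window (f : Fin n → ZMod (n+1)) (c₀ : ZMod (n+1)) {j : ℕ} (hj : j ≤ n + 1) :
    (Finset.univ.filter fun i => (f i - c₀).val < j).card + acc f c₀.val
      = acc f (c₀.val + j) := by
  induction j with
  | zero => simp
  | succ j ih =>
      have hj' : j ≤ n + 1 := Nat.le_of_succ_le hj
      have hsplit : (Finset.univ.filter fun i => (f i - c₀).val < j + 1)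
          = (Finset.univ.filter fun i => (f i - c₀).val < j)
            ∪ (Finset.univ.filter fun i => (f i - c₀).val = j) := by
        ext i
        simp only [Finset.mem_filter, Finset.mem_union, Finset.mem_univ, true_and]
        omega
      have hdisj : Disjoint (Finset.univ.filter fun i => (f i - c₀).val < j)
          (Finset.univ.filter fun i => (f i - c₀).val = j) := by
        rw [Finset.disjoint_filter]
        intro i _ h1 h2
        omega
      have hfib : (Finset.univ.filter fun i => (f i - c₀).val = j).card
          = cnt f (c₀.val + j) := by
        rw [cnt]
        congr 1
        apply Finset.filter_congr
        intro i _
        exact fiber_eq f c₀ hj i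
      rw [hsplit, Finset.card_union_of_disjoint hdisj, hfib]
      have : c₀.val + (j+1) = (c₀.val + j) + 1 := by ring
      rw [this, acc_succ]
      omega

/-- the shifted candidate parking function -/
def pf (f : Fin n → ZMod (n+1)) (c₀ : ZMod (n+1)) : Fin n → ℕ :=
  fun i => (f i - c₀).val + 1

/-- the discrete height function -/
def D (f : Fin n → ZMod (n+1)) (k : ℕ) : ℤ := (acc f k : ℤ) - k

lemma D_add_period (f : Fin n → ZMod (n+1)) (k : ℕ) : D f (k + (n+1)) = D f k - 1 := by
  simp only [D, acc_add_period]
  push_cast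
  ring

/-- the parking condition for the shift, in terms of `D` -/
lemma isParking_pf_iff (f : Fin n → ZMod (n+1)) (c₀ : ZMod (n+1)) :
    IsParking (pf f c₀) ↔ ∀ j ∈ Finset.Icc 1 n, D f c₀.val ≤ D f (c₀.val + j) := by
  unfold IsParking
  apply forall₂_congr
  intro j hj
  have hj' : j ≤ n := (Finset.mem_Icc.1 hj).2
  have hw := count_window f c₀ (j := j) (le_trans hj' (Nat.le_succ n))
  have hfe : (Finset.univ.filter fun i => pf f c₀ i ≤ j)
      = (Finset.univ.filter fun i => (f i - c₀).val < j) := by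
    apply Finset.filter_congr
    intro i _
    simp only [pf]
    omega
  rw [hfe]
  unfold D
  omega

/-- condition in terms of the value `c = c₀.val` -/
def Cond (f : Fin n → ZMod (n+1)) (c : ℕ) : Prop :=
  ∀ j ∈ Finset.Icc 1 n, D f c ≤ D f (c + j)

lemma cond_unique (f : Fin n → ZMod (n+1)) {c c' : ℕ} (hc : c ≤ n) (hc' : c' ≤ n)
    (h : Cond f c) (h' : Cond f c') : c = c' := by
  by_contra hne
  -- wlog c < c'
  rcases Nat.lt_or_ge c c' with hlt | hge
  · have h1 := h (c' - c) (Finset.mem_Icc.2 ⟨by omega, by omega⟩)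
    have h2 := h' (c + (n+1) - c') (Finset.mem_Icc.2 ⟨by omega, by omega⟩)
    rw [show c + (c' - c) = c' from by omega] at h1
    rw [show c' + (c + (n+1) - c') = c + (n+1) from by omega, D_add_period] at h2
    omega
  · have hlt : c' < c := by omega
    have h1 := h' (c - c') (Finset.mem_Icc.2 ⟨by omega, by omega⟩)
    have h2 := h (c' + (n+1) - c) (Finset.mem_Icc.2 ⟨by omega, by omega⟩)
    rw [show c' + (c - c') = c from by omega] at h1
    rw [show c + (c' + (n+1) - c) = c' + (n+1) from by omega, D_add_period] at h2
    omega

lemma cond_exists (f : Fin n → ZMod (n+1)) : ∃ c ≤ n, Cond f c := by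
  classical
  have hex : ∃ k, k ≤ n ∧ ∀ t ∈ Finset.range (n+1), D f k ≤ D f t := by
    obtain ⟨c, hcmem, hcmin⟩ := Finset.exists_min_image (Finset.range (n+1)) (D f)
      ⟨0, Finset.mem_range.2 (Nat.succ_pos n)⟩
    exact ⟨c, Nat.lt_succ_iff.1 (Finset.mem_range.1 hcmem), hcmin⟩
  set c := Nat.find hex with hcdef
  obtain ⟨hcle, hcmin⟩ := Nat.find_spec hex
  have hfirst : ∀ t < c, D f c < D f t := by
    intro t ht
    have h1 : D f c ≤ D f t := hcmin t (Finset.mem_range.2 (by omega))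
    rcases lt_or_eq_of_le h1 with h2 | h2
    · exact h2
    · exfalso
      exact Nat.find_min hex ht ⟨by omega, fun s hs => h2 ▸ hcmin s hs⟩
  refine ⟨c, hcle, ?_⟩
  intro j hj
  obtain ⟨hj1, hj2⟩ := Finset.mem_Icc.1 hj
  rcases le_or_gt (c + j) n with hle | hgt
  · exact hcmin (c + j) (Finset.mem_range.2 (by omega))
  · have ht : c + j = (c + j - (n+1)) + (n+1) := by omega
    rw [ht, D_add_period]
    have := hfirst (c + j - (n+1)) (by omega)
    omega

/-- the main existence-and-uniqueness lemma for the shift -/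
lemma exists_unique_shift (f : Fin n → ZMod (n+1)) :
    ∃! c₀ : ZMod (n+1), IsParking (pf f c₀) := by
  obtain ⟨c, hcle, hcond⟩ := cond_exists f
  refine ⟨(c : ZMod (n+1)), ?_, ?_⟩
  · show IsParking (pf f (c : ZMod (n+1)))
    rw [isParking_pf_iff, ZMod.val_cast_of_lt (by omega)]
    exact hcond
  · intro c₀ hc₀
    rw [isParking_pf_iff] at hc₀
    have hval : c₀.val ≤ n := Nat.lt_succ_iff.1 (ZMod.val_lt c₀)
    have := cond_unique f hval hcle hc₀ hcond
    rw [← this, ZMod.natCast_zmod_val]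

lemma parking_le {p : Fin n → ℕ} (hp : IsParking p) (hn : 1 ≤ n) (i : Fin n) : p i ≤ n := by
  have h1 := hp n (Finset.mem_Icc.2 ⟨hn, le_refl n⟩)
  have h2 : (Finset.univ.filter fun i => p i ≤ n).card ≤ Fintype.card (Fin n) := by
    rw [← Finset.card_univ]
    exact Finset.card_filter_le _ _
  rw [Fintype.card_fin] at h2
  have h3 : (Finset.univ.filter fun i => p i ≤ n) = Finset.univ := by
    apply Finset.eq_univ_of_card
    rw [Fintype.card_fin]
    omega
  have := Finset.mem_filter.1 (h3 ▸ Finset.mem_univ i)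
  exact this.2

/-- encoding a parking function together with a shift as an arbitrary function -/
def encode (p : Fin n → ℕ) (c : ZMod (n+1)) : Fin n → ZMod (n+1) :=
  fun k => ((p k - 1 : ℕ) : ZMod (n+1)) + c

lemma pf_encode {p : Fin n → ℕ} (hp1 : ∀ i, 1 ≤ p i) (hpn : ∀ i, p i ≤ n)
    (c : ZMod (n+1)) : pf (encode p c) c = p := by
  funext i
  have h1 : encode p c i - c = ((p i - 1 : ℕ) : ZMod (n+1)) := by
    simp [encode]
  have h2 : ((p i - 1 : ℕ) : ZMod (n+1)).val = p i - 1 :=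
    ZMod.val_cast_of_lt (by have := hpn i; omega)
  have := hp1 i
  simp only [pf, h1, h2]
  omega

lemma card_prod_eq (hn : 1 ≤ n) :
    ((parkFinset n) ×ˢ (Finset.univ : Finset (ZMod (n+1)))).card
      = (Finset.univ : Finset (Fin n → ZMod (n+1))).card := by
  classical
  apply Finset.card_bij (fun pc _ => encode pc.1 pc.2)
  · intro a ha
    exact Finset.mem_univ _
  · -- injectivity
    rintro ⟨p, c⟩ h ⟨p', c'⟩ h' heq
    simp only [Finset.mem_product, parkFinset, Finset.mem_filter,
      Fintype.mem_piFinset, Finset.mem_Icc] at h h'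
    have hp1 : ∀ i, 1 ≤ p i := fun i => (h.1.1 i).1
    have hpn : ∀ i, p i ≤ n := fun i => (h.1.1 i).2
    have hp1' : ∀ i, 1 ≤ p' i := fun i => (h'.1.1 i).1
    have hpn' : ∀ i, p' i ≤ n := fun i => (h'.1.1 i).2
    have e1 : pf (encode p c) c = p := pf_encode hp1 hpn c
    have e2 : pf (encode p c) c' = p' := by rw [heq]; exact pf_encode hp1' hpn' c'
    have hpark1 : IsParking (pf (encode p c) c) := by rw [e1]; exact h.1.2
    have hpark2 : IsParking (pf (encode p c) c') := by rw [e2]; exact h'.1.2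
    obtain ⟨c₀, -, huniq⟩ := exists_unique_shift (encode p c)
    have hcc : c = c' := by
      rw [huniq c hpark1, huniq c' hpark2]
    refine Prod.ext ?_ hcc
    rw [← e1, ← e2, hcc]
  · -- surjectivity
    intro f _
    obtain ⟨c₀, hc₀, -⟩ := exists_unique_shift f
    have hc₀' : IsParking (pf f c₀) := hc₀
    have hmem : (pf f c₀, c₀) ∈ (parkFinset n) ×ˢ (Finset.univ : Finset (ZMod (n+1))) := by
      rw [Finset.mem_product]
      refine ⟨?_, Finset.mem_univ _⟩
      rw [parkFinset, Finset.mem_filter]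
      refine ⟨?_, hc₀'⟩
      rw [Fintype.mem_piFinset]
      intro i
      rw [Finset.mem_Icc]
      exact ⟨Nat.le_add_left 1 _, parking_le hc₀' hn i⟩
    refine ⟨(pf f c₀, c₀), hmem, ?_⟩
    funext i
    show ((pf f c₀ i - 1 : ℕ) : ZMod (n+1)) + c₀ = f i
    have : pf f c₀ i - 1 = (f i - c₀).val := by simp [pf]
    rw [this, ZMod.natCast_zmod_val]
    ring

end ParkAux

/-- The number of parking functions of length `n` equals `(n+1)^(n-1)`. -/
theorem card_parkFinset (n : ℕ) : (parkFinset n).card = (n + 1) ^ (n - 1) := by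
  rcases Nat.eq_zero_or_pos n with rfl | hn
  · decide
  · have h := ParkAux.card_prod_eq (n := n) hn
    rw [Finset.card_product, Finset.card_univ, Finset.card_univ, ZMod.card,
      Fintype.card_fun, ZMod.card, Fintype.card_fin] at h
    have hpow : (n + 1) ^ n = (n + 1) ^ (n - 1) * (n + 1) := by
      rw [← pow_succ]
      congr 1
      omega
    rw [hpow] at h
    exact Nat.eq_of_mul_eq_mul_right (by omega) h
end

section
/- For every integer partition μ of n, the number of parking functions p of length n whose multiset of nonzero contents {c_i(p) : 1 ≤ i ≤ n, c_i(p) ≠ 0} equals the multiset of parts of μ satisfies: (m(μ)! · μ!) · #{p ∈ park(n) : nonzero contents of p form μ} = n! · (n)_{ℓ(μ)−1}. -/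
/-- The content `c_i(p)`: the number of indices `j` with `p j = i`. -/
def content {n : ℕ} (p : Fin n → ℕ) (i : ℕ) : ℕ :=
  (Finset.univ.filter fun j => p j = i).card

/-- The multiset of nonzero contents `{c_i(p) : 1 ≤ i ≤ n, c_i(p) ≠ 0}`. -/
def nonzeroContents {n : ℕ} (p : Fin n → ℕ) : Multiset ℕ :=
  ((Finset.Icc 1 n).val.map fun i => content p i).filter (· ≠ 0)

/-- `μ! = μ_1!⋯μ_ℓ!` for a multiset `μ` of parts. -/
def partsFact (μ : Multiset ℕ) : ℕ := (μ.map Nat.factorial).prod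

/-- `m(μ)! = m_1!·m_2!⋯` where `m_i` is the multiplicity of `i` in `μ`. -/
def multFact (μ : Multiset ℕ) : ℕ := ∏ i ∈ μ.toFinset, (μ.count i).factorial



open Finset

def valMS {N : ℕ} (q : Fin N → ℕ) : Multiset ℕ := Finset.univ.val.map q

lemma count_valMS {N : ℕ} (q : Fin N → ℕ) (v : ℕ) :
    (valMS q).count v = (Finset.univ.filter fun a => q a = v).card := by
  rw [valMS, Multiset.count_map]
  rw [show (Finset.univ.filter fun a => q a = v).card
      = Multiset.card ((Finset.univ : Finset (Fin N)).val.filter fun a => q a = v) from rfl]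
  congr 1
  exact Multiset.filter_congr (fun x _ => by constructor <;> (intro h; exact h.symm))

lemma exists_perm_of_valMS_eq {N : ℕ} (q p : Fin N → ℕ) (h : valMS q = valMS p) :
    ∃ σ : Equiv.Perm (Fin N), q = p ∘ σ := by
  have hc : ∀ v, Fintype.card {a // q a = v} = Fintype.card {a // p a = v} := by
    intro v
    have := congrArg (Multiset.count v) h
    rw [count_valMS, count_valMS] at this
    simpa [Fintype.card_subtype] using this
  refine ⟨Equiv.ofFiberEquiv (f := q) (g := p) fun v => Fintype.equivOfCardEq (hc v), ?_⟩
  funext a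
  exact (Equiv.ofFiberEquiv_map (f := q) (g := p) _ a).symm

lemma valMS_comp_perm {N : ℕ} (p : Fin N → ℕ) (σ : Equiv.Perm (Fin N)) :
    valMS (p ∘ σ) = valMS p := by
  have h1 : (Finset.univ.val.map (⇑σ)) = (Finset.univ : Finset (Fin N)).val := by
    have := congrArg Finset.val (Finset.map_univ_equiv σ)
    simpa [Finset.map_val] using this
  rw [valMS, show p ∘ ⇑σ = p ∘ ⇑σ from rfl, ← Multiset.map_map, h1]
  rfl

lemma valMS_ofFn {N : ℕ} (q : Fin N → ℕ) : valMS q = ((List.ofFn q : List ℕ) : Multiset ℕ) := by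
  simp [valMS]

lemma exists_fn_valMS {N : ℕ} (ν : Multiset ℕ) (hν : ν.card = N) :
    ∃ p : Fin N → ℕ, valMS p = ν := by
  subst hν
  refine ⟨fun i => ν.toList.get (Fin.cast (Multiset.length_toList ν).symm i), ?_⟩
  rw [valMS_ofFn]
  have : (List.ofFn fun i : Fin ν.card => ν.toList.get (Fin.cast (Multiset.length_toList ν).symm i)) = ν.toList := by
    apply List.ext_getElem
    · simp
    · intro i h1 h2
      simp
  rw [this, Multiset.coe_toList]

lemma lemA {N : ℕ} (ν : Multiset ℕ) (hν : ν.card = N) (F : Finset (Fin N → ℕ))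
    (hF : ∀ q, q ∈ F ↔ valMS q = ν) :
    (∏ v ∈ ν.toFinset, (ν.count v).factorial) * F.card = N.factorial := by
  classical
  obtain ⟨p₀, hp₀⟩ := exists_fn_valMS ν hν
  set S := ∏ v ∈ ν.toFinset, (ν.count v).factorial with hS
  -- stabilizer cardinality
  have hstab : (Finset.univ.filter fun g : Equiv.Perm (Fin N) => p₀ ∘ g = p₀).card = S := by
    rw [← Fintype.card_subtype]
    rw [DomMulAct.stabilizer_card' p₀]
    have himg : Finset.univ.image p₀ = ν.toFinset := by
      rw [← hp₀, valMS, Multiset.toFinset_map, Finset.val_toFinset]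
    rw [himg]
    refine Finset.prod_congr rfl fun v _ => ?_
    rw [Fintype.card_subtype, ← count_valMS, hp₀]
  -- each fiber has cardinality S
  have hfiber : ∀ q ∈ F, (Finset.univ.filter fun σ : Equiv.Perm (Fin N) => p₀ ∘ σ = q).card = S := by
    intro q hq
    obtain ⟨σ₀, rfl⟩ := exists_perm_of_valMS_eq q p₀ (((hF q).mp hq).trans hp₀.symm)
    rw [← hstab]
    apply Finset.card_equiv (Equiv.mulRight σ₀⁻¹)
    intro σ
    simp only [Finset.mem_filter, Finset.mem_univ, true_and]
    constructor
    · intro h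
      funext x
      have := congrFun h (σ₀⁻¹ x)
      simpa using this
    · intro h
      funext x
      have := congrFun h (σ₀ x)
      simpa using this
  have hmaps : ∀ σ ∈ (Finset.univ : Finset (Equiv.Perm (Fin N))), p₀ ∘ σ ∈ F := by
    intro σ _
    rw [hF]
    rw [valMS_comp_perm, hp₀]
  have := Finset.card_eq_sum_card_fiberwise hmaps
  rw [Finset.sum_congr rfl hfiber] at this
  simp only [Finset.sum_const, smul_eq_mul] at this
  rw [Finset.card_univ, Fintype.card_perm, Fintype.card_fin] at this
  rw [mul_comm] at this
  exact this.symm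

open Finset

def psum {m : ℕ} (g : Fin m → ℕ) (j : ℕ) : ℕ :=
  ∑ i ∈ Finset.range j, if h : i < m then g ⟨i, h⟩ else 0

def shiftf {n : ℕ} (b : Fin (n+1) → ℕ) (k : Fin (n+1)) : Fin (n+1) → ℕ := fun i => b (i + k)

def GoodShift {n : ℕ} (b : Fin (n+1) → ℕ) (k : Fin (n+1)) : Prop :=
  ∀ j ∈ Finset.Icc 1 n, j ≤ psum (shiftf b k) j

section cycle
variable {n : ℕ} (b : Fin (n+1) → ℕ)
open Fin.NatCast

private def B (m : ℕ) : ℕ := b (m : Fin (n+1))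
private def P (m : ℕ) : ℕ := ∑ i ∈ Finset.range m, B b i
private def S (m : ℕ) : ℤ := (P b m : ℤ) - m

lemma P_add (k j : ℕ) : P b (k + j) = P b k + ∑ i ∈ Finset.range j, B b (k + i) := by
  induction j with
  | zero => simp
  | succ j ih => rw [← Nat.add_assoc, P, Finset.sum_range_succ, ← P, ih, Finset.sum_range_succ,
      Nat.add_assoc]

lemma sum_B_period (hsum : ∑ v, b v = n) (m : ℕ) :
    ∑ i ∈ Finset.range (n+1), B b (m + i) = n := by
  have h1 : ∑ i ∈ Finset.range (n+1), B b (m + i) = ∑ x : Fin (n+1), B b (m + x.val) :=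
    (Fin.sum_univ_eq_sum_range (fun i => B b (m + i)) (n+1)).symm
  rw [h1]
  have h2 : ∀ x : Fin (n+1), B b (m + x.val) = b ((m : Fin (n+1)) + x) := by
    intro x
    rw [B, Nat.cast_add, Fin.cast_val_eq_self]
  rw [Finset.sum_congr rfl fun x _ => h2 x]
  exact (Fintype.sum_equiv (Equiv.addLeft (m : Fin (n+1))) (fun x => b ((m : Fin (n+1)) + x)) b
    (fun x => rfl)).trans hsum

lemma P_period (hsum : ∑ v, b v = n) (m : ℕ) : P b (m + (n+1)) = P b m + n := by
  rw [P_add, sum_B_period b hsum]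

lemma S_period (hsum : ∑ v, b v = n) (m : ℕ) : S b (m + (n+1)) = S b m - 1 := by
  rw [S, S, P_period b hsum]
  push_cast
  ring

lemma psum_shift (k : Fin (n+1)) (j : ℕ) (hj : j ≤ n) :
    psum (shiftf b k) j = ∑ i ∈ Finset.range j, B b (k.val + i) := by
  rw [psum]
  apply Finset.sum_congr rfl
  intro i hi
  have hi' : i < n + 1 := lt_of_lt_of_le (Finset.mem_range.mp hi) (Nat.le_succ_of_le hj)
  rw [dif_pos hi']
  rw [shiftf, B]
  congr 1
  apply Fin.ext
  rw [Fin.add_def, Fin.val_natCast]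
  simp [Nat.add_comm]

lemma goodShift_iff (k : Fin (n+1)) :
    GoodShift b k ↔ ∀ j ∈ Finset.Icc 1 n, S b k.val ≤ S b (k.val + j) := by
  apply forall₂_congr
  intro j hj
  have hj' : j ≤ n := (Finset.mem_Icc.mp hj).2
  rw [psum_shift b k j hj']
  have hP := P_add b k.val j
  rw [S, S]
  omega
end cycle

lemma cycle_lemma {n : ℕ} (b : Fin (n+1) → ℕ) (hsum : ∑ v, b v = n) :
    ∃! k : Fin (n+1), GoodShift b k := by
  obtain ⟨m₀, hm₀r, hm₀min⟩ := Finset.exists_min_image (Finset.range (n+1)) (S b)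
    ⟨0, Finset.mem_range.mpr (Nat.succ_pos n)⟩
  have hex : ∃ m, S b m = S b m₀ ∧ m ≤ n := ⟨m₀, rfl, Nat.lt_succ_iff.mp (Finset.mem_range.mp hm₀r)⟩
  set k₀ := Nat.find hex with hk₀
  obtain ⟨hk₀v, hk₀n⟩ := Nat.find_spec hex
  have hk₀r : k₀ ∈ Finset.range (n+1) := Finset.mem_range.mpr (Nat.lt_succ_of_le hk₀n)
  have hmin : ∀ j ∈ Finset.range (n+1), S b k₀ ≤ S b j := by
    intro j hj
    rw [hk₀v]
    exact hm₀min j hj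
  have hlt : ∀ m, m < k₀ → S b k₀ < S b m := by
    intro m hm
    have h1 := Nat.find_min hex hm
    have h2 : m ≤ n := le_trans (Nat.le_of_lt hm) hk₀n
    have h3 : S b m₀ ≤ S b m := hm₀min m (Finset.mem_range.mpr (Nat.lt_succ_of_le h2))
    rw [hk₀v]
    rcases lt_or_eq_of_le h3 with h | h
    · exact h
    · exact absurd ⟨h.symm, h2⟩ h1
  refine ⟨⟨k₀, Finset.mem_range.mp hk₀r⟩, ?_, ?_⟩
  · show GoodShift b _
    rw [goodShift_iff]
    intro j hj
    obtain ⟨hj1, hj2⟩ := Finset.mem_Icc.mp hj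
    simp only
    rcases le_or_gt (k₀ + j) n with h | h
    · exact hmin _ (Finset.mem_range.mpr (Nat.lt_succ_of_le h))
    · have ht : k₀ + j = (k₀ + j - (n+1)) + (n+1) := by omega
      rw [ht, S_period b hsum]
      have htlt : k₀ + j - (n+1) < k₀ := by omega
      have := hlt _ htlt
      omega
  · intro k' hk'
    rw [goodShift_iff] at hk'
    apply Fin.ext
    simp only
    set k := k'.val with hk
    have hkn : k ≤ n := Nat.lt_succ_iff.mp k'.isLt
    by_contra hne
    rcases lt_or_gt_of_ne hne with h | h
    -- k < k₀
    · have hj : k₀ - k ∈ Finset.Icc 1 n := Finset.mem_Icc.mpr ⟨by omega, by omega⟩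
      have := hk' _ hj
      rw [show k + (k₀ - k) = k₀ by omega] at this
      exact absurd this (not_le.mpr (hlt k h))
    -- k > k₀
    · have hj : k₀ + (n+1) - k ∈ Finset.Icc 1 n := Finset.mem_Icc.mpr ⟨by omega, by omega⟩
      have h1 := hk' _ hj
      rw [show k + (k₀ + (n+1) - k) = k₀ + (n+1) by omega, S_period b hsum] at h1
      have h2 := hmin k (Finset.mem_range.mpr (Nat.lt_succ_of_le hkn))
      omega

----------------------------------------------------------------
-- glue definitions
----------------------------------------------------------------

/-- content vector of a parking function, as a function on `Fin n`. -/
def kappa {n : ℕ} (p : Fin n → ℕ) : Fin n → ℕ := fun j => content p ((j : ℕ) + 1)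

/-- parking condition on a content vector. -/
def parkC {n : ℕ} (c : Fin n → ℕ) : Prop := ∀ j ∈ Finset.Icc 1 n, j ≤ psum c j

instance {n : ℕ} : DecidablePred (parkC (n := n)) := fun _ =>
  Finset.decidableDforallFinset

/-- multiset of nonzero values. -/
def msNZ {n : ℕ} (c : Fin n → ℕ) : Multiset ℕ := (valMS c).filter (· ≠ 0)

/-- the multiset of values corresponding to a content vector. -/
def nuOf {n : ℕ} (c : Fin n → ℕ) : Multiset ℕ :=
  (Finset.univ : Finset (Fin n)).val.bind fun j => Multiset.replicate (c j) ((j : ℕ) + 1)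

----------------------------------------------------------------
-- glue lemmas
----------------------------------------------------------------

lemma multiset_card_le_sum (s : Multiset ℕ) (h : ∀ x ∈ s, 1 ≤ x) : Multiset.card s ≤ s.sum := by
  induction s using Multiset.induction with
  | empty => simp
  | cons a s ih =>
    rw [Multiset.card_cons, Multiset.sum_cons]
    have ha := h a (Multiset.mem_cons_self a s)
    have := ih (fun x hx => h x (Multiset.mem_cons_of_mem hx))
    omega

lemma multiset_le_sum {s : Multiset ℕ} {x : ℕ} (hx : x ∈ s) : x ≤ s.sum := by
  obtain ⟨t, rfl⟩ := Multiset.exists_cons_of_mem hx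
  rw [Multiset.sum_cons]
  exact Nat.le_add_right _ _

lemma partsFact_filter (s : Multiset ℕ) :
    partsFact (s.filter (· ≠ 0)) = (s.map Nat.factorial).prod := by
  conv_rhs => rw [← Multiset.filter_add_not (· ≠ 0) s]
  rw [Multiset.map_add, Multiset.prod_add, partsFact]
  have h : ∀ x ∈ (s.filter (fun a => ¬ a ≠ 0)).map Nat.factorial, x = 1 := by
    intro x hx
    obtain ⟨a, ha, rfl⟩ := Multiset.mem_map.mp hx
    have h2 := (Multiset.mem_filter.mp ha).2
    simp only [ne_eq, not_not] at h2
    simp [h2]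
  rw [Multiset.prod_eq_one h, mul_one]

lemma filter_not_eq_replicate (s : Multiset ℕ) :
    s.filter (fun a => ¬ a ≠ 0)
      = Multiset.replicate (Multiset.card (s.filter (fun a => ¬ a ≠ 0))) 0 := by
  rw [Multiset.eq_replicate_card]
  intro b hb
  have := (Multiset.mem_filter.mp hb).2
  simpa using this

lemma sum_valMS {n : ℕ} (c : Fin n → ℕ) : (valMS c).sum = ∑ v, c v := rfl

lemma card_valMS {n : ℕ} (c : Fin n → ℕ) : Multiset.card (valMS c) = n := by
  rw [valMS, Multiset.card_map]
  exact (Finset.card_univ (α := Fin n)).trans (Fintype.card_fin n)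

lemma valMS_succ {n : ℕ} (g : Fin (n+1) → ℕ) :
    valMS g = valMS (fun v : Fin n => g (Fin.castSucc v)) + {g (Fin.last n)} := by
  rw [valMS_ofFn, valMS_ofFn, List.ofFn_succ' g, List.concat_eq_append]
  rw [← Multiset.coe_add]
  rfl

lemma shiftf_shiftf {n : ℕ} (b : Fin (n+1) → ℕ) (k k' : Fin (n+1)) :
    shiftf (shiftf b k) k' = shiftf b (k' + k) := by
  funext i
  show b (i + k' + k) = b (i + (k' + k))
  rw [add_assoc]

lemma shiftf_zero {n : ℕ} (b : Fin (n+1) → ℕ) : shiftf b 0 = b := by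
  funext i
  show b (i + 0) = b i
  rw [add_zero]

lemma valMS_shiftf {n : ℕ} (b : Fin (n+1) → ℕ) (k : Fin (n+1)) :
    valMS (shiftf b k) = valMS b :=
  valMS_comp_perm b (Equiv.addRight k)

lemma psum_eq_castSucc_sum {n : ℕ} (g : Fin (n+1) → ℕ) :
    psum g n = ∑ v : Fin n, g (Fin.castSucc v) := by
  rw [psum]
  rw [← Fin.sum_univ_eq_sum_range (fun i => if h : i < n + 1 then g ⟨i, h⟩ else 0) n]
  refine Finset.sum_congr rfl fun v _ => ?_
  rw [dif_pos (Nat.lt_succ_of_lt v.isLt)]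
  exact congrArg g (Fin.ext rfl)

lemma psum_congr_lt {m m' : ℕ} (g : Fin m → ℕ) (g' : Fin m' → ℕ) (j : ℕ)
    (hj : j ≤ m) (hj' : j ≤ m')
    (h : ∀ i (h1 : i < m) (h2 : i < m'), i < j → g ⟨i, h1⟩ = g' ⟨i, h2⟩) :
    psum g j = psum g' j := by
  rw [psum, psum]
  refine Finset.sum_congr rfl fun i hi => ?_
  have hij := Finset.mem_range.mp hi
  rw [dif_pos (lt_of_lt_of_le hij hj), dif_pos (lt_of_lt_of_le hij hj')]
  exact h i _ _ hij

def extf {n : ℕ} (c : Fin n → ℕ) : Fin (n+1) → ℕ :=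
  fun i => if h : (i : ℕ) < n then c ⟨i, h⟩ else 0

lemma extf_castSucc {n : ℕ} (c : Fin n → ℕ) (v : Fin n) : extf c (Fin.castSucc v) = c v := by
  rw [extf, dif_pos (by simpa using v.isLt)]
  exact congrArg c (Fin.ext rfl)

lemma extf_last {n : ℕ} (c : Fin n → ℕ) : extf c (Fin.last n) = 0 := by
  rw [extf, dif_neg (by simp)]

lemma content_eq_count {n : ℕ} (p : Fin n → ℕ) (v : ℕ) :
    content p v = (valMS p).count v := (count_valMS p v).symm

lemma bind_count {n : ℕ} (f : Fin n → Multiset ℕ) (v : ℕ) :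
    ((Finset.univ : Finset (Fin n)).val.bind f).count v = ∑ j, (f j).count v := by
  rw [Multiset.count_bind]
  rfl

lemma count_nuOf_succ {n : ℕ} (c : Fin n → ℕ) (j : Fin n) :
    (nuOf c).count ((j : ℕ) + 1) = c j := by
  rw [nuOf, bind_count]
  have h : ∀ j' : Fin n,
      (Multiset.replicate (c j') ((j' : ℕ) + 1)).count ((j : ℕ) + 1)
        = if j' = j then c j' else 0 := by
    intro j'
    rw [Multiset.count_replicate]
    by_cases h : j' = j
    · rw [if_pos (by rw [h]), if_pos h]
    · rw [if_neg (fun he => h (Fin.ext (by omega))), if_neg h]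
  rw [Finset.sum_congr rfl fun j' _ => h j']
  rw [Finset.sum_ite_eq' Finset.univ j (fun j' => c j'), if_pos (Finset.mem_univ j)]

lemma count_nuOf_not {n : ℕ} (c : Fin n → ℕ) {v : ℕ} (hv : ∀ j : Fin n, v ≠ (j : ℕ) + 1) :
    (nuOf c).count v = 0 := by
  rw [nuOf, bind_count]
  refine Finset.sum_eq_zero fun j _ => ?_
  rw [Multiset.count_replicate, if_neg (fun h => hv j h.symm)]

lemma card_nuOf {n : ℕ} (c : Fin n → ℕ) : Multiset.card (nuOf c) = ∑ j, c j := by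
  rw [nuOf, Multiset.card_bind]
  rw [show Multiset.card ∘ (fun j : Fin n => Multiset.replicate (c j) ((j:ℕ)+1))
      = fun j : Fin n => c j from funext fun j => Multiset.card_replicate _ _]
  rfl

lemma mem_nuOf {n : ℕ} (c : Fin n → ℕ) {v : ℕ} (hv : v ∈ nuOf c) :
    ∃ j : Fin n, v = (j : ℕ) + 1 := by
  obtain ⟨j, _, hj2⟩ := Multiset.mem_bind.mp hv
  exact ⟨j, (Multiset.eq_of_mem_replicate hj2)⟩

lemma valMS_eq_nuOf_iff {n : ℕ} (p : Fin n → ℕ) (c : Fin n → ℕ) :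
    valMS p = nuOf c ↔ ((∀ i, p i ∈ Finset.Icc 1 n) ∧ kappa p = c) := by
  constructor
  · intro h
    constructor
    · intro i
      have hm : p i ∈ valMS p := Multiset.mem_map.mpr ⟨i, Finset.mem_univ i, rfl⟩
      rw [h] at hm
      obtain ⟨j, hj⟩ := mem_nuOf c hm
      rw [Finset.mem_Icc, hj]
      exact ⟨Nat.le_add_left 1 _, j.isLt⟩
    · funext j
      have h2 := congrArg (Multiset.count ((j : ℕ) + 1)) h
      rw [count_nuOf_succ] at h2
      rw [kappa, content_eq_count]
      exact h2
  · rintro ⟨h1, h2⟩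
    refine Multiset.ext.mpr fun v => ?_
    by_cases hv : ∃ j : Fin n, v = (j : ℕ) + 1
    · obtain ⟨j, rfl⟩ := hv
      rw [count_nuOf_succ, ← h2, ← content_eq_count]
      rfl
    · push_neg at hv
      rw [count_nuOf_not c hv, Multiset.count_eq_zero]
      intro hmem
      obtain ⟨i, _, hi2⟩ := Multiset.mem_map.mp hmem
      have h3 := Finset.mem_Icc.mp (h1 i)
      rw [hi2] at h3
      exact hv ⟨v - 1, by omega⟩ (show v = v - 1 + 1 by omega)

lemma isParking_iff_parkC {n : ℕ} (p : Fin n → ℕ) (hp : ∀ i, p i ∈ Finset.Icc 1 n) :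
    IsParking p ↔ parkC (kappa p) := by
  unfold IsParking parkC
  apply forall₂_congr
  intro j hj
  obtain ⟨hj1, hj2⟩ := Finset.mem_Icc.mp hj
  suffices h : (Finset.univ.filter fun i => p i ≤ j).card = psum (kappa p) j by rw [h]
  have hmaps : ∀ i ∈ Finset.univ.filter fun i => p i ≤ j, p i ∈ Finset.Icc 1 j := by
    intro i hi
    exact Finset.mem_Icc.mpr ⟨(Finset.mem_Icc.mp (hp i)).1, (Finset.mem_filter.mp hi).2⟩
  rw [Finset.card_eq_sum_card_fiberwise hmaps]
  have h2 : ∀ v ∈ Finset.Icc 1 j,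
      ((Finset.univ.filter fun i => p i ≤ j).filter fun i => p i = v).card = content p v := by
    intro v hv
    rw [Finset.filter_filter, content]
    congr 1
    apply Finset.filter_congr
    intro i _
    have := (Finset.mem_Icc.mp hv).2
    constructor
    · exact And.right
    · intro h; exact ⟨h ▸ this, h⟩
  rw [Finset.sum_congr rfl h2]
  have himg : Finset.Icc 1 j = (Finset.range j).image (· + 1) := by
    ext v
    simp only [Finset.mem_Icc, Finset.mem_image, Finset.mem_range]
    constructor
    · intro h; exact ⟨v - 1, by omega, by omega⟩
    · rintro ⟨w, hw, rfl⟩; omega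
  rw [himg, Finset.sum_image (fun x _ y _ h => by
    have h' : x + 1 = y + 1 := h
    omega), psum]
  refine Finset.sum_congr rfl fun i hi => ?_
  have hin : i < n := lt_of_lt_of_le (Finset.mem_range.mp hi) hj2
  rw [dif_pos hin]
  rfl

lemma nonzeroContents_eq_msNZ {n : ℕ} (p : Fin n → ℕ) :
    nonzeroContents p = msNZ (kappa p) := by
  rw [nonzeroContents, msNZ, valMS]
  congr 1
  have himg : (Finset.image (fun j : Fin n => (j : ℕ) + 1) Finset.univ) = Finset.Icc 1 n := by
    ext v
    simp only [Finset.mem_image, Finset.mem_univ, true_and, Finset.mem_Icc]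
    constructor
    · rintro ⟨j, rfl⟩; exact ⟨Nat.le_add_left 1 _, j.isLt⟩
    · intro h; exact ⟨⟨v - 1, by omega⟩, show v - 1 + 1 = v by omega⟩
  have hval : (Finset.Icc 1 n).val
      = ((Finset.univ : Finset (Fin n)).val.map fun j : Fin n => (j : ℕ) + 1) := by
    rw [← himg]
    exact Finset.image_val_of_injOn fun x _ y _ h => Fin.ext (by
      have h' : (x : ℕ) + 1 = (y : ℕ) + 1 := h
      omega)
  rw [hval, Multiset.map_map]
  rfl

lemma sum_msNZ {n : ℕ} (c : Fin n → ℕ) : (msNZ c).sum = ∑ v, c v := by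
  rw [← sum_valMS]
  conv_rhs => rw [← Multiset.filter_add_not (· ≠ 0) (valMS c)]
  rw [Multiset.sum_add]
  have h : (Multiset.filter (fun a => ¬ a ≠ 0) (valMS c)).sum = 0 :=
    Multiset.sum_eq_zero fun x hx => by simpa using (Multiset.mem_filter.mp hx).2
  rw [h, Nat.add_zero]
  rfl

lemma valMS_eq_msNZ_add {n : ℕ} (c : Fin n → ℕ) :
    valMS c = msNZ c + Multiset.replicate (n - Multiset.card (msNZ c)) 0 := by
  have hc := congrArg Multiset.card (Multiset.filter_add_not (· ≠ 0) (valMS c))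
  rw [Multiset.card_add, card_valMS] at hc
  conv_lhs => rw [← Multiset.filter_add_not (· ≠ 0) (valMS c)]
  congr 1
  rw [filter_not_eq_replicate]
  congr 1
  have : Multiset.card (msNZ c) = Multiset.card (Multiset.filter (· ≠ 0) (valMS c)) := rfl
  omega

lemma prod_count_nuOf {n : ℕ} (c : Fin n → ℕ) :
    ∏ v ∈ (nuOf c).toFinset, ((nuOf c).count v).factorial = ∏ j : Fin n, (c j).factorial := by
  have htf : (nuOf c).toFinset
      = (Finset.univ.filter fun j => c j ≠ 0).image fun j : Fin n => (j : ℕ) + 1 := by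
    ext v
    simp only [Multiset.mem_toFinset, Finset.mem_image, Finset.mem_filter, Finset.mem_univ,
      true_and, nuOf, Multiset.mem_bind, Multiset.mem_replicate]
    constructor
    · rintro ⟨j, _, hj2, rfl⟩
      exact ⟨j, by omega, rfl⟩
    · rintro ⟨j, hj, rfl⟩
      exact ⟨j, Finset.mem_univ j, by omega, rfl⟩
  rw [htf, Finset.prod_image (fun x _ y _ h => Fin.ext (by
    have h' : (x : ℕ) + 1 = (y : ℕ) + 1 := h
    omega))]
  rw [Finset.prod_congr rfl fun j _ => by rw [count_nuOf_succ]]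
  exact Finset.prod_subset (Finset.filter_subset _ _) fun x _ hx => by
    have : c x = 0 := by
      by_contra h
      exact hx (Finset.mem_filter.mpr ⟨Finset.mem_univ x, h⟩)
    rw [this]
    rfl

lemma partsFact_msNZ {n : ℕ} (c : Fin n → ℕ) :
    partsFact (msNZ c) = ∏ j : Fin n, (c j).factorial := by
  rw [msNZ, partsFact_filter, valMS, Multiset.map_map]
  rfl

lemma shiftf_last_eq_zero {n : ℕ} (b : Fin (n+1) → ℕ) (hn : 1 ≤ n)
    (hsum : ∑ v, b v = n) {k : Fin (n+1)} (hg : GoodShift b k) :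
    shiftf b k (Fin.last n) = 0 := by
  have h1 : ∑ v, shiftf b k v = n :=
    (Fintype.sum_equiv (Equiv.addRight k) (shiftf b k) b fun x => rfl).trans hsum
  have h2 := Fin.sum_univ_castSucc (f := shiftf b k)
  have h3 := psum_eq_castSucc_sum (shiftf b k)
  have h4 := hg n (Finset.mem_Icc.mpr ⟨hn, le_refl n⟩)
  omega


/-- For every integer partition `μ` of `n`, the number of parking functions of length `n`
whose multiset of nonzero contents equals the multiset of parts of `μ` satisfies
`(m(μ)!·μ!) · #{p ∈ park(n) : contents of p form μ} = n! · (n)_{ℓ(μ)-1}`. -/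
theorem card_parkFinset_with_content (n : ℕ) (μ : Nat.Partition n) :
    (multFact μ.parts * partsFact μ.parts) *
      ((parkFinset n).filter fun p => nonzeroContents p = μ.parts).card =
    n.factorial * n.descFactorial (μ.parts.card - 1) := by
  rcases Nat.eq_zero_or_pos n with hn0 | hn
  · -- degenerate case n = 0
    subst hn0
    have hparts : μ.parts = 0 := by
      rw [Multiset.eq_zero_iff_forall_notMem]
      intro x hx
      have h1 := μ.parts_pos hx
      have h2 : x ≤ Multiset.sum μ.parts := multiset_le_sum hx
      rw [μ.parts_sum] at h2
      omega
    have hx : ((parkFinset 0).filter fun p => nonzeroContents p = μ.parts)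
        = {fun i : Fin 0 => (i.elim0 : ℕ)} := by
      apply Finset.eq_singleton_iff_unique_mem.mpr
      constructor
      · rw [Finset.mem_filter]
        refine ⟨?_, ?_⟩
        · rw [parkFinset, Finset.mem_filter]
          refine ⟨Fintype.mem_piFinset.mpr fun i => i.elim0, fun j hj => ?_⟩
          simp at hj
        · rw [hparts, nonzeroContents]
          simp
      · intro q _
        funext i
        exact i.elim0
    rw [hx, hparts]
    simp [multFact, partsFact]
  -- main case n ≥ 1
  have hparts_pos : ∀ x ∈ μ.parts, 1 ≤ x := fun x hx => μ.parts_pos hx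
  set ℓ := Multiset.card μ.parts with hℓdef
  have hℓn : ℓ ≤ n := by
    have h := multiset_card_le_sum _ hparts_pos
    rw [μ.parts_sum] at h
    exact h
  have hℓ1 : 1 ≤ ℓ := by
    by_contra h
    have h0 : μ.parts = 0 := Multiset.card_eq_zero.mp (by omega)
    have := μ.parts_sum
    rw [h0] at this
    simp at this
    omega
  have hpartsle : ∀ x ∈ μ.parts, x ≤ n := fun x hx => μ.parts_sum ▸ multiset_le_sum hx
  set C := (Fintype.piFinset fun _ : Fin n => Finset.range (n+1)).filter
      (fun c => msNZ c = μ.parts ∧ parkC c) with hC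
  set ν₀ := μ.parts + Multiset.replicate (n + 1 - ℓ) 0 with hν₀
  set D := (Fintype.piFinset fun _ : Fin (n+1) => Finset.range (n+1)).filter
      (fun b => valMS b = ν₀) with hD
  set X := (parkFinset n).filter (fun p => nonzeroContents p = μ.parts) with hX
  -- C membership unfolded
  have hmemC : ∀ c, c ∈ C ↔ ((∀ i, c i ∈ Finset.range (n+1)) ∧ msNZ c = μ.parts ∧ parkC c) := by
    intro c
    rw [hC, Finset.mem_filter, Fintype.mem_piFinset]
  ------------------------------------------------------------------
  -- Step 1 : partsFact μ.parts * X.card = C.card * n.factorial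
  ------------------------------------------------------------------
  have hmemX : ∀ q, q ∈ X ↔ ((∀ i, q i ∈ Finset.Icc 1 n) ∧ IsParking q
      ∧ nonzeroContents q = μ.parts) := by
    intro q
    rw [hX, Finset.mem_filter, parkFinset, Finset.mem_filter, Fintype.mem_piFinset, and_assoc]
  have hmapsX : ∀ p ∈ X, kappa p ∈ C := by
    intro p hp
    obtain ⟨hpi, hispark, hnz⟩ := (hmemX p).mp hp
    rw [hmemC]
    refine ⟨?_, ?_, ?_⟩
    · intro j
      rw [Finset.mem_range]
      have h1 : kappa p j ≤ n := by
        calc kappa p j ≤ (Finset.univ : Finset (Fin n)).card := by unfold kappa content; exact Finset.card_filter_le _ _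
          _ = n := by rw [Finset.card_univ, Fintype.card_fin]
      omega
    · rw [← nonzeroContents_eq_msNZ]; exact hnz
    · exact (isParking_iff_parkC p hpi).mp hispark
  have step1 : partsFact μ.parts * X.card = C.card * n.factorial := by
    rw [Finset.card_eq_sum_card_fiberwise hmapsX, Finset.mul_sum]
    have hfib : ∀ c ∈ C,
        partsFact μ.parts * (X.filter fun p => kappa p = c).card = n.factorial := by
      intro c hc
      obtain ⟨hcpi, hcms, hcpark⟩ := (hmemC c).mp hc
      have hsumc : ∑ v, c v = n := by
        rw [← sum_msNZ, hcms, μ.parts_sum]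
      have hcard : Multiset.card (nuOf c) = n := by rw [card_nuOf, hsumc]
      have hmem : ∀ q, q ∈ X.filter (fun p => kappa p = c) ↔ valMS q = nuOf c := by
        intro q
        rw [Finset.mem_filter, hmemX q]
        constructor
        · rintro ⟨⟨hq1, _, _⟩, hq4⟩
          exact (valMS_eq_nuOf_iff q c).mpr ⟨hq1, hq4⟩
        · intro hvq
          obtain ⟨hq1, hq2⟩ := (valMS_eq_nuOf_iff q c).mp hvq
          refine ⟨⟨hq1, ?_, ?_⟩, hq2⟩
          · rw [isParking_iff_parkC q hq1, hq2]; exact hcpark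
          · rw [nonzeroContents_eq_msNZ, hq2, hcms]
      have hA := lemA (nuOf c) hcard _ hmem
      rw [prod_count_nuOf, ← partsFact_msNZ, hcms] at hA
      exact hA
    rw [Finset.sum_congr rfl hfib, Finset.sum_const, smul_eq_mul]
  ------------------------------------------------------------------
  -- Step 2 : counting D
  ------------------------------------------------------------------
  have hν₀card : Multiset.card ν₀ = n + 1 := by
    rw [hν₀, Multiset.card_add, Multiset.card_replicate, ← hℓdef]
    omega
  have hmemD : ∀ b, b ∈ D ↔ valMS b = ν₀ := by
    intro b
    rw [hD, Finset.mem_filter]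
    constructor
    · exact And.right
    · intro h
      refine ⟨Fintype.mem_piFinset.mpr fun i => ?_, h⟩
      rw [Finset.mem_range]
      have hm : b i ∈ valMS b := Multiset.mem_map.mpr ⟨i, Finset.mem_univ i, rfl⟩
      rw [h, hν₀] at hm
      rcases Multiset.mem_add.mp hm with h' | h'
      · exact Nat.lt_succ_of_le (hpartsle _ h')
      · rw [Multiset.eq_of_mem_replicate h']; omega
  have hnot0 : (0:ℕ) ∉ μ.parts := fun h => absurd (μ.parts_pos h) (lt_irrefl 0)
  have hDcount : ((n+1-ℓ).factorial * multFact μ.parts) * D.card = (n+1).factorial := by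
    have hA := lemA ν₀ hν₀card D hmemD
    have htf : ν₀.toFinset = insert 0 μ.parts.toFinset := by
      rw [hν₀, Multiset.toFinset_add, Multiset.toFinset_replicate, if_neg (by omega)]
      rw [Finset.union_comm, Finset.insert_eq]
    have h0 : (0:ℕ) ∉ μ.parts.toFinset := fun h => hnot0 (Multiset.mem_toFinset.mp h)
    rw [htf, Finset.prod_insert h0] at hA
    have hc0 : ν₀.count 0 = n + 1 - ℓ := by
      rw [hν₀, Multiset.count_add, Multiset.count_replicate, if_pos rfl,
        Multiset.count_eq_zero.mpr hnot0]
      omega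
    have hcv : ∀ v ∈ μ.parts.toFinset, (ν₀.count v).factorial = (μ.parts.count v).factorial := by
      intro v hv
      have hvne : v ≠ 0 := fun h => h0 (h ▸ hv)
      rw [hν₀, Multiset.count_add, Multiset.count_replicate, if_neg (fun h => hvne h.symm),
        Nat.add_zero]
    rw [hc0, Finset.prod_congr rfl hcv] at hA
    exact hA
  have hDsum : ∀ b ∈ D, ∑ v, b v = n := by
    intro b hb
    have h := (hmemD b).mp hb
    have h2 : (valMS b).sum = ν₀.sum := by rw [h]
    rw [sum_valMS] at h2
    have h3 : ν₀.sum = n := by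
      show (μ.parts + Multiset.replicate (n + 1 - ℓ) 0).sum = n
      rw [Multiset.sum_add, μ.parts_sum, Multiset.sum_replicate, smul_eq_mul,
        Nat.mul_zero, Nat.add_zero]
    omega
  ------------------------------------------------------------------
  -- Step 3 : D.card = (n+1) * C.card via cycle lemma
  ------------------------------------------------------------------
  have step2 : D.card = (n+1) * C.card := by
    classical
    set f : (Fin (n+1) → ℕ) → Fin (n+1) :=
      fun b => if h : ∃ k, GoodShift b k then h.choose else 0 with hf
    have hfgood : ∀ b ∈ D, GoodShift b (f b) ∧ ∀ k, GoodShift b k → f b = k := by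
      intro b hb
      obtain ⟨k, hk, huniq⟩ := cycle_lemma b (hDsum b hb)
      have hex : ∃ k, GoodShift b k := ⟨k, hk⟩
      have h1 : GoodShift b (f b) := by
        rw [hf]
        simp only [dif_pos hex]
        exact hex.choose_spec
      exact ⟨h1, fun k' hk' => (huniq (f b) h1).trans (huniq k' hk').symm⟩
    rw [Finset.card_eq_sum_card_fiberwise (fun b (_ : b ∈ D) => Finset.mem_univ (f b))]
    have hfib : ∀ k : Fin (n+1), (D.filter fun b => f b = k).card = C.card := by
      intro k
      apply Finset.card_bij' (i := fun b _ => fun v : Fin n => shiftf b k (Fin.castSucc v))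
        (j := fun c _ => shiftf (extf c) (-k))
      -- i maps into C
      · intro b hb
        obtain ⟨hbD, hbk⟩ := Finset.mem_filter.mp hb
        have hgood : GoodShift b k := hbk ▸ (hfgood b hbD).1
        have hbsum := hDsum b hbD
        have hlast : shiftf b k (Fin.last n) = 0 :=
          shiftf_last_eq_zero b hn hbsum hgood
        have hsplit : valMS (shiftf b k)
            = valMS (fun v : Fin n => shiftf b k (Fin.castSucc v)) + {0} := by
          rw [valMS_succ (shiftf b k), hlast]
        rw [hmemC]
        refine ⟨?_, ?_, ?_⟩
        · intro v
          have hbpi := (Finset.mem_filter.mp hbD).1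
          exact Fintype.mem_piFinset.mp hbpi _
        · -- msNZ = μ.parts
          have h1 : msNZ (fun v : Fin n => shiftf b k (Fin.castSucc v))
              = Multiset.filter (· ≠ 0) (valMS (shiftf b k)) := by
            show (valMS fun v : Fin n => shiftf b k (Fin.castSucc v)).filter (· ≠ 0)
              = Multiset.filter (· ≠ 0) (valMS (shiftf b k))
            rw [hsplit, Multiset.filter_add,
              show Multiset.filter (· ≠ 0) ({0} : Multiset ℕ) = 0 from
                Multiset.filter_eq_nil.mpr (fun a ha => by
                  rw [Multiset.mem_singleton.mp ha]; simp), add_zero]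
          rw [h1, valMS_shiftf, (hmemD b).mp hbD]
          show Multiset.filter (· ≠ 0) (μ.parts + Multiset.replicate (n + 1 - ℓ) 0) = μ.parts
          rw [Multiset.filter_add,
            Multiset.filter_eq_self.mpr (fun a ha => by have := μ.parts_pos ha; omega),
            show Multiset.filter (· ≠ 0) (Multiset.replicate (n+1-ℓ) (0:ℕ)) = 0 from
              Multiset.filter_eq_nil.mpr (fun a ha => by
                rw [Multiset.eq_of_mem_replicate ha]; simp),
            add_zero]
        · -- parkC
          intro j hj
          have hjn := (Finset.mem_Icc.mp hj).2
          rw [psum_congr_lt _ (shiftf b k) j hjn (Nat.le_succ_of_le hjn)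
            (fun i h1 h2 hij => congrArg (shiftf b k) (Fin.ext rfl))]
          exact hgood j hj
      -- j maps into fiber
      · intro c hc
        obtain ⟨hcpi, hcms, hcpark⟩ := (hmemC c).mp hc
        have hcℓ : Multiset.card (msNZ c) = ℓ := by rw [hcms, hℓdef]
        have hvalc : valMS c = μ.parts + Multiset.replicate (n - ℓ) 0 := by
          rw [valMS_eq_msNZ_add c, hcms, ← hℓdef]
        have hvext : valMS (extf c) = ν₀ := by
          rw [valMS_succ (extf c), extf_last]
          rw [show (fun v : Fin n => extf c (Fin.castSucc v)) = c from funext (extf_castSucc c)]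
          rw [hvalc, hν₀, add_assoc]
          congr 1
          rw [show ({0} : Multiset ℕ) = Multiset.replicate 1 0 from rfl,
            ← Multiset.replicate_add]
          congr 1
          omega
        have hbD : shiftf (extf c) (-k) ∈ D := by
          rw [hmemD, valMS_shiftf, hvext]
        have hshift : shiftf (shiftf (extf c) (-k)) k = extf c := by
          rw [shiftf_shiftf, add_neg_cancel, shiftf_zero]
        have hgood : GoodShift (shiftf (extf c) (-k)) k := by
          intro j hj
          have hjn := (Finset.mem_Icc.mp hj).2
          rw [hshift]
          rw [psum_congr_lt (extf c) c j (Nat.le_succ_of_le hjn) hjn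
            (fun i h1 h2 hij => by
              rw [show (⟨i, h1⟩ : Fin (n+1)) = Fin.castSucc ⟨i, h2⟩ from Fin.ext rfl,
                extf_castSucc])]
          exact hcpark j hj
        exact Finset.mem_filter.mpr ⟨hbD, (hfgood _ hbD).2 k hgood⟩
      -- left inverse
      · intro b hb
        obtain ⟨hbD, hbk⟩ := Finset.mem_filter.mp hb
        have hgood : GoodShift b k := hbk ▸ (hfgood b hbD).1
        have hlast : shiftf b k (Fin.last n) = 0 :=
          shiftf_last_eq_zero b hn (hDsum b hbD) hgood
        funext i
        show extf (fun v : Fin n => shiftf b k (Fin.castSucc v)) (i + -k) = b i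
        by_cases hcase : ((i + -k : Fin (n+1)) : ℕ) < n
        · rw [extf, dif_pos hcase]
          have h1 : Fin.castSucc (⟨((i + -k : Fin (n+1)) : ℕ), hcase⟩ : Fin n) = i + -k :=
            Fin.ext rfl
          rw [h1]
          show b (i + -k + k) = b i
          rw [neg_add_cancel_right]
        · rw [extf, dif_neg hcase]
          have h2 : i + -k = Fin.last n := by
            apply Fin.ext
            have := (i + -k).isLt
            simp only [Fin.val_last]
            omega
          have h3 : b i = shiftf b k (i + -k) := by
            show b i = b (i + -k + k)
            rw [neg_add_cancel_right]
          rw [h3, h2, hlast]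
      -- right inverse
      · intro c hc
        funext v
        show shiftf (shiftf (extf c) (-k)) k (Fin.castSucc v) = c v
        rw [shiftf_shiftf, add_neg_cancel, shiftf_zero, extf_castSucc]
    rw [Finset.sum_congr rfl (fun k _ => hfib k), Finset.sum_const, smul_eq_mul,
      Finset.card_univ, Fintype.card_fin]
  ------------------------------------------------------------------
  -- Assemble
  ------------------------------------------------------------------
  have h5 : multFact μ.parts * ((n+1-ℓ).factorial * C.card) = n.factorial := by
    have h := hDcount
    rw [step2, Nat.factorial_succ] at h
    apply Nat.eq_of_mul_eq_mul_left (show 0 < n+1 by omega)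
    rw [← h]
    ring
  have h6 : n.factorial = n.descFactorial (ℓ - 1) * (n+1-ℓ).factorial := by
    have h := Nat.factorial_mul_descFactorial (n := n) (k := ℓ - 1) (by omega)
    rw [show n - (ℓ - 1) = n + 1 - ℓ by omega] at h
    rw [← h]
    ring
  have h7 : multFact μ.parts * C.card = n.descFactorial (ℓ - 1) := by
    apply Nat.eq_of_mul_eq_mul_right (Nat.factorial_pos (n+1-ℓ))
    calc multFact μ.parts * C.card * (n+1-ℓ).factorial
        = multFact μ.parts * ((n+1-ℓ).factorial * C.card) := by ring
      _ = n.factorial := h5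
      _ = n.descFactorial (ℓ - 1) * (n+1-ℓ).factorial := h6
  calc (multFact μ.parts * partsFact μ.parts) * X.card
      = multFact μ.parts * (partsFact μ.parts * X.card) := by ring
    _ = multFact μ.parts * (C.card * n.factorial) := by rw [step1]
    _ = (multFact μ.parts * C.card) * n.factorial := by ring
    _ = n.descFactorial (ℓ - 1) * n.factorial := by rw [h7]
    _ = n.factorial * n.descFactorial (μ.parts.card - 1) := by rw [hℓdef]; ring
end

section
/- Let R be a commutative ring, a : ℕ → R a sequence with a(0) = 1, and m, k nonnegative integers. Then Σ_{c} (k! / (c_1!···c_m!)) · Π_{i=1}^{m} a(c_i) = Σ_{λ ⊢ k} (k!/(λ!·m(λ)!)) · (m)_{ℓ(λ)} · Π_{j=1}^{ℓ(λ)} a(λ_j), where the left sum ranges over all functions c : {1,...,m} → ℕ with c_1 + ··· + c_m = k and the right sum over all integer partitions λ of k. (This computes the k-th moment of the auxiliary umbra m.α: (m.α)^k ≃ Σ_{λ ⊢ k} d_λ (m)_{ℓ(λ)} a_λ with d_λ = k!/(λ!·m(λ)!).) -/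
open Finset

def vals {m : ℕ} (c : Fin m → ℕ) : Multiset ℕ :=
  ((Finset.univ.val.map c).filter (· ≠ 0))

lemma vals_succ {m : ℕ} (c : Fin (m + 1) → ℕ) :
    vals c = if c 0 = 0 then vals (Fin.tail c) else c 0 ::ₘ vals (Fin.tail c) := by
  unfold vals
  rw [Fin.univ_succ]
  simp only [Finset.cons_val, Multiset.map_cons, Finset.map_val, Multiset.map_map]
  rw [Multiset.filter_cons]
  by_cases h : c 0 = 0 <;>
    simp [h, Fin.tail, Function.comp_def] <;> exact List.Perm.refl _

lemma mem_vals {m : ℕ} {c : Fin m → ℕ} {x : ℕ} :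
    x ∈ vals c ↔ x ≠ 0 ∧ ∃ i, c i = x := by
  simp [vals, List.mem_ofFn, and_comm]

lemma prod_vals {M : Type*} [CommMonoid M] {m : ℕ} (c : Fin m → ℕ) (f : ℕ → M)
    (hf : f 0 = 1) : ∏ i, f (c i) = ((vals c).map f).prod := by
  have h0 : ∏ i, f (c i) = ((Finset.univ.val.map c).map f).prod := by
    rw [Finset.prod, Multiset.map_map]; rfl
  rw [h0]
  conv_lhs => rw [← Multiset.filter_add_not (fun x => x ≠ 0) (Finset.univ.val.map c)]
  rw [Multiset.map_add, Multiset.prod_add]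
  have h1 : (((Finset.univ.val.map c).filter (fun x => ¬ x ≠ 0)).map f).prod = 1 := by
    apply Multiset.prod_eq_one
    intro x hx
    simp only [Multiset.mem_map, Multiset.mem_filter, ne_eq, not_not] at hx
    obtain ⟨y, ⟨-, hy0⟩, rfl⟩ := hx
    rw [hy0, hf]
  rw [h1, mul_one]
  rfl

lemma sum_vals {m : ℕ} (c : Fin m → ℕ) : (vals c).sum = ∑ i, c i := by
  have h0 : ∑ i, c i = (Finset.univ.val.map c).sum := rfl
  rw [h0]
  conv_rhs => rw [← Multiset.filter_add_not (fun x => x ≠ 0) (Finset.univ.val.map c)]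
  rw [Multiset.sum_add]
  have h1 : ((Finset.univ.val.map c).filter (fun x => ¬ x ≠ 0)).sum = 0 := by
    apply Multiset.sum_eq_zero
    intro x hx
    simp only [Multiset.mem_filter, ne_eq, not_not] at hx
    exact hx.2
  rw [h1, add_zero]
  rfl

lemma multFact_erase {P : Multiset ℕ} {v : ℕ} (hv : v ∈ P) :
    multFact P = P.count v * multFact (P.erase v) := by
  have h1 : multFact (P.erase v) = ∏ i ∈ P.toFinset, ((P.erase v).count i).factorial := by
    unfold multFact
    apply Finset.prod_subset (Multiset.toFinset_subset.2 (Multiset.subset_of_le (Multiset.erase_le v P)))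
    intro x _ hnx
    simp [Multiset.count_eq_zero_of_notMem (by simpa using hnx)]
  rw [h1]
  unfold multFact
  rw [← Finset.mul_prod_erase _ _ (Multiset.mem_toFinset.2 hv),
      ← Finset.mul_prod_erase _ (fun i => ((P.erase v).count i).factorial)
        (Multiset.mem_toFinset.2 hv)]
  rw [Multiset.count_erase_self, ← mul_assoc,
    Nat.mul_factorial_pred (Multiset.count_pos.2 hv).ne']
  congr 1
  apply Finset.prod_congr rfl
  intro x hx
  rw [Multiset.count_erase_of_ne (by simp at hx; exact hx.1)]

def fib (m : ℕ) (S : Finset ℕ) (P : Multiset ℕ) : Finset (Fin m → ℕ) :=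
  (Fintype.piFinset fun _ : Fin m => S).filter (fun c => vals c = P)

lemma fib_piece (S : Finset ℕ) (hS : 0 ∈ S) (m : ℕ) (P : Multiset ℕ) (v : ℕ)
    (hv : v ∈ S) :
    ((fib (m+1) S P).filter (fun c => c 0 = v)).card =
      if v = 0 then (fib m S P).card
      else if v ∈ P then (fib m S (P.erase v)).card else 0 := by
  split_ifs with h0 hvP
  · subst h0
    apply Finset.card_nbij' Fin.tail (Fin.cons 0)
    · intro c hc
      simp only [fib, Finset.mem_coe, Finset.mem_filter, Fintype.mem_piFinset] at hc ⊢
      obtain ⟨⟨h1, h2⟩, h3⟩ := hc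
      refine ⟨fun i => h1 i.succ, ?_⟩
      rw [vals_succ c, if_pos h3] at h2
      exact h2
    · intro d hd
      simp only [fib, Finset.mem_coe, Finset.mem_filter, Fintype.mem_piFinset] at hd ⊢
      obtain ⟨h1, h2⟩ := hd
      refine ⟨⟨fun i => Fin.cases (by simpa using hS) (fun j => by simpa using h1 j) i, ?_⟩,
        Fin.cons_zero _ _⟩
      rw [vals_succ, Fin.cons_zero, if_pos rfl, Fin.tail_cons]
      exact h2
    · intro c hc
      have h3 : c 0 = 0 := (Finset.mem_filter.1 hc).2
      rw [← h3]
      exact Fin.cons_self_tail c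
    · intro d _
      simp
  · apply Finset.card_nbij' Fin.tail (Fin.cons v)
    · intro c hc
      simp only [fib, Finset.mem_coe, Finset.mem_filter, Fintype.mem_piFinset] at hc ⊢
      obtain ⟨⟨h1, h2⟩, h3⟩ := hc
      refine ⟨fun i => h1 i.succ, ?_⟩
      rw [← h2, vals_succ c, if_neg (h3 ▸ h0), h3, Multiset.erase_cons_head]
    · intro d hd
      simp only [fib, Finset.mem_coe, Finset.mem_filter, Fintype.mem_piFinset] at hd ⊢
      obtain ⟨h1, h2⟩ := hd
      refine ⟨⟨fun i => Fin.cases (by simpa using hv) (fun j => by simpa using h1 j) i, ?_⟩,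
        Fin.cons_zero _ _⟩
      rw [vals_succ, Fin.cons_zero, if_neg h0, Fin.tail_cons, h2]
      exact Multiset.cons_erase hvP
    · intro c hc
      have h3 : c 0 = v := (Finset.mem_filter.1 hc).2
      rw [← h3]
      exact Fin.cons_self_tail c
    · intro d _
      simp
  · rw [Finset.card_eq_zero]
    apply Finset.eq_empty_of_forall_notMem
    intro c hc
    simp only [fib, Finset.mem_filter, Fintype.mem_piFinset] at hc
    obtain ⟨⟨-, h2⟩, h3⟩ := hc
    apply hvP
    rw [← h2]
    exact mem_vals.2 ⟨h3 ▸ h0, ⟨0, h3⟩⟩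

lemma descFactorial_rec (m l : ℕ) :
    (m+1).descFactorial l = m.descFactorial l + l * m.descFactorial (l-1) := by
  cases l with
  | zero => simp
  | succ t =>
    rw [Nat.succ_descFactorial_succ, Nat.descFactorial_succ, Nat.succ_sub_one]
    rcases le_or_gt t m with hle | hlt
    · have h : m + 1 = (m - t) + (t + 1) := by omega
      rw [h, add_mul]
    · rw [Nat.descFactorial_eq_zero_iff_lt.2 hlt]
      simp [Nat.sub_eq_zero_of_le (le_of_lt hlt)]

lemma fib_card (S : Finset ℕ) (hS : 0 ∈ S) :
    ∀ (m : ℕ) (P : Multiset ℕ), 0 ∉ P → (∀ x ∈ P, x ∈ S) →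
      (fib m S P).card * multFact P = m.descFactorial (Multiset.card P) := by
  intro m
  induction m with
  | zero =>
    intro P hP hPS
    by_cases h : P = 0
    · subst h
      have h1 : fib 0 S 0 = Fintype.piFinset fun _ : Fin 0 => S :=
        Finset.filter_true_of_mem (fun c _ => by simp [vals])
      rw [h1]
      simp [multFact, Fintype.card_piFinset]
    · obtain ⟨t, ht⟩ : ∃ t, Multiset.card P = t + 1 :=
        Nat.exists_eq_succ_of_ne_zero (by simpa using h)
      have h1 : fib 0 S P = ∅ := by
        apply Finset.filter_false_of_mem
        intro c _
        have h2 : vals c = 0 := by simp [vals]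
        rw [h2]
        exact fun hc => h hc.symm
      rw [h1, ht]
      simp
  | succ m ih =>
    intro P hP hPS
    have hsplit : (fib (m+1) S P).card =
        ∑ v ∈ S, ((fib (m+1) S P).filter (fun c => c 0 = v)).card := by
      apply Finset.card_eq_sum_card_fiberwise
      intro c hc
      exact Fintype.mem_piFinset.1 (Finset.mem_filter.1 hc).1 0
    rw [hsplit]
    have hrw : ∀ v ∈ S, ((fib (m+1) S P).filter (fun c => c 0 = v)).card =
        if v = 0 then (fib m S P).card
        else if v ∈ P then (fib m S (P.erase v)).card else 0 :=
      fun v hv => fib_piece S hS m P v hv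
    rw [Finset.sum_congr rfl hrw]
    rw [← Finset.add_sum_erase S _ hS, if_pos rfl]
    have hrest : ∑ v ∈ S.erase 0,
        (if v = 0 then (fib m S P).card else if v ∈ P then (fib m S (P.erase v)).card else 0)
        = ∑ v ∈ P.toFinset, (fib m S (P.erase v)).card := by
      rw [Finset.sum_congr rfl (fun v hv =>
        if_neg (Finset.ne_of_mem_erase hv) : ∀ v ∈ S.erase 0, _)]
      rw [Finset.sum_ite, Finset.sum_const_zero, add_zero]
      apply Finset.sum_congr _ (fun _ _ => rfl)
      ext x
      simp only [Finset.mem_filter, Finset.mem_erase, Multiset.mem_toFinset]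
      constructor
      · exact fun hx => hx.2
      · intro hx
        exact ⟨⟨fun h => hP (h ▸ hx), hPS x hx⟩, hx⟩
    rw [hrest, add_mul, Finset.sum_mul]
    have hterm : ∀ v ∈ P.toFinset,
        (fib m S (P.erase v)).card * multFact P =
          P.count v * m.descFactorial (Multiset.card P - 1) := by
      intro v hv
      have hvP : v ∈ P := Multiset.mem_toFinset.1 hv
      rw [multFact_erase hvP, mul_comm (P.count v), ← mul_assoc]
      rw [ih (P.erase v) (fun h => hP (Multiset.mem_of_mem_erase h))
        (fun x hx => hPS x (Multiset.mem_of_mem_erase hx))]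
      rw [Multiset.card_erase_of_mem hvP]
      rw [Nat.pred_eq_sub_one, mul_comm]
    rw [Finset.sum_congr rfl hterm, ← Finset.sum_mul]
    rw [Multiset.toFinset_sum_count_eq]
    rw [ih P hP hPS]
    -- (m+1)_ℓ = (m)_ℓ + ℓ * (m)_{ℓ-1}
    exact (descFactorial_rec m (Multiset.card P)).symm


set_option maxHeartbeats 1000000 in
/-- The `k`-th moment of the auxiliary umbra `m.α`:
`Σ_{c_1+⋯+c_m=k} (k!/(c_1!⋯c_m!))·Π a(c_i) = Σ_{λ ⊢ k} (k!/(λ!·m(λ)!))·(m)_{ℓ(λ)}·a_λ`. -/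
theorem moment_dot_product {R : Type*} [CommRing R] (a : ℕ → R) (ha : a 0 = 1)
    (m k : ℕ) :
    ∑ c ∈ (Fintype.piFinset fun _ : Fin m => Finset.range (k + 1)).filter
        (fun c => ∑ i, c i = k),
      ((k.factorial / ∏ i, (c i).factorial : ℕ) : R) * ∏ i, a (c i) =
    ∑ l : Nat.Partition k,
      (((k.factorial / (partsFact l.parts * multFact l.parts)) *
          m.descFactorial l.parts.card : ℕ) : R) * (l.parts.map a).prod := by
  classical
  set s := (Fintype.piFinset fun _ : Fin m => Finset.range (k + 1)).filter
      (fun c => ∑ i, c i = k) with hs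
  set t : Finset (Multiset ℕ) := Finset.univ.image (fun l : Nat.Partition k => l.parts)
    with ht
  set F : Multiset ℕ → R := fun P =>
    (((k.factorial / (partsFact P * multFact P)) *
        m.descFactorial (Multiset.card P) : ℕ) : R) * (P.map a).prod with hF
  have hmaps : ∀ c ∈ s, vals c ∈ t := by
    intro c hc
    have hsum : (vals c).sum = k := by
      rw [sum_vals]; exact (Finset.mem_filter.1 hc).2
    exact Finset.mem_image.2 ⟨⟨vals c,
      fun {i} hi => Nat.pos_of_ne_zero (mem_vals.1 hi).1, hsum⟩, Finset.mem_univ _, rfl⟩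
  have hinj : ∀ l₁ ∈ (Finset.univ : Finset (Nat.Partition k)), ∀ l₂ ∈ Finset.univ,
      l₁.parts = l₂.parts → l₁ = l₂ := fun l₁ _ l₂ _ h => Nat.Partition.ext h
  have hmain : ∀ P ∈ t,
      (∑ c ∈ s.filter (fun c => vals c = P),
        ((k.factorial / ∏ i, (c i).factorial : ℕ) : R) * ∏ i, a (c i)) = F P := by
    intro P hPt
    obtain ⟨l, -, hlP⟩ := Finset.mem_image.1 hPt
    have hP0 : 0 ∉ P := fun h => (l.parts_pos (hlP ▸ h)).false
    have hPk : P.sum = k := hlP ▸ l.parts_sum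
    have hterm : ∀ c ∈ s.filter (fun c => vals c = P),
        ((k.factorial / ∏ i, (c i).factorial : ℕ) : R) * ∏ i, a (c i) =
        ((k.factorial / partsFact P : ℕ) : R) * (P.map a).prod := by
      intro c hc
      obtain ⟨-, hcP⟩ := Finset.mem_filter.1 hc
      have h1 : ∏ i, (c i).factorial = partsFact P := by
        rw [prod_vals c Nat.factorial rfl, hcP]; rfl
      have h2 : ∏ i, a (c i) = (P.map a).prod := by
        rw [prod_vals c a ha, hcP]
      rw [h1, h2]
    have hfib : s.filter (fun c => vals c = P) = fib m (insert 0 P.toFinset) P := by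
      ext c
      simp only [fib, Finset.mem_filter, Fintype.mem_piFinset, hs, Finset.mem_range]
      constructor
      · rintro ⟨⟨-, -⟩, hcP⟩
        refine ⟨fun i => ?_, hcP⟩
        rcases eq_or_ne (c i) 0 with h | h
        · rw [h]; exact Finset.mem_insert_self 0 _
        · exact Finset.mem_insert_of_mem (Multiset.mem_toFinset.2
            (hcP ▸ mem_vals.2 ⟨h, i, rfl⟩))
      · rintro ⟨hci, hcP⟩
        have hsum : ∑ i, c i = k := by rw [← sum_vals, hcP, hPk]
        refine ⟨⟨fun i => ?_, hsum⟩, hcP⟩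
        rw [Nat.lt_succ_iff]
        rcases Finset.mem_insert.1 (hci i) with h | h
        · omega
        · have hmem : c i ∈ P := Multiset.mem_toFinset.1 h
          calc c i ≤ P.sum := by
                rw [← Multiset.cons_erase hmem, Multiset.sum_cons]
                exact Nat.le_add_right _ _
            _ = k := hPk
    have hcard := fib_card (insert 0 P.toFinset) (Finset.mem_insert_self 0 _) m P hP0
      (fun x hx => Finset.mem_insert_of_mem (Multiset.mem_toFinset.2 hx))
    have hbell : P.bell * partsFact P * multFact P = k.factorial := by
      have h := Multiset.bell_mul_eq P
      rw [Finset.erase_eq_of_notMem (by simpa using hP0), hPk] at h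
      exact h
    have hpos1 : 0 < partsFact P := by
      apply Multiset.prod_pos
      intro x hx
      obtain ⟨y, -, rfl⟩ := Multiset.mem_map.1 hx
      exact Nat.factorial_pos y
    have hpos2 : 0 < multFact P := Finset.prod_pos fun i _ => Nat.factorial_pos _
    have hd1 : k.factorial / partsFact P = P.bell * multFact P :=
      Nat.div_eq_of_eq_mul_left hpos1 (by rw [← hbell]; ring)
    have hd2 : k.factorial / (partsFact P * multFact P) = P.bell :=
      Nat.div_eq_of_eq_mul_left (Nat.mul_pos hpos1 hpos2) (by rw [← hbell]; ring)
    have hnat : #(s.filter (fun c => vals c = P)) * (k.factorial / partsFact P) =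
        k.factorial / (partsFact P * multFact P) * m.descFactorial (Multiset.card P) := by
      rw [hfib, hd1, hd2, ← hcard]
      ring
    rw [Finset.sum_congr rfl hterm, Finset.sum_const, nsmul_eq_mul, hF, ← mul_assoc,
      ← Nat.cast_mul, hnat]
  refine Eq.trans (Finset.sum_fiberwise_of_maps_to hmaps _).symm ?_
  refine Eq.trans (Finset.sum_congr rfl hmain) ?_
  exact Finset.sum_image hinj
end

section
/- Fix N ≥ 1 and a positive integer k, let R = ℚ[x_1,...,x_N], and let H(t) = 1 + Σ_{m≥1} h_m t^m ∈ R[[t]]. Suppose F ∈ R[[t]] has zero constant term and satisfies F(t) = t · (H^k)(F(t)) (i.e., t·PF^{(k)}(t) := F(t) is the compositional inverse of t/H(t)^k, so the coefficient of t^{n+1} in F is the Frobenius characteristic PF_n^{(k)} of the k-parking function module). Then for every n ≥ 1: n! · (coefficient of t^{n+1} in F) = Σ_{p ∈ park(n)} Π_{i=1}^{n} c_i(p)! · b_{c_i(p)}, where b_m denotes the coefficient of t^m in H(t)^k (with b_0 = 1). (Equivalently, V_n(k.θ̄_1,...,k.θ̄_n) ≃ PF_n^{(k)}.) -/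
/-- Composition `f(g)` of formal power series (substitution of `g` into `f`); this is the
correct composition whenever `g` has zero constant term, since then
`coeff n (g^k) = 0` for `k > n`. -/
noncomputable def psComp {R : Type*} [CommRing R] (f g : PowerSeries R) : PowerSeries R :=
  PowerSeries.mk fun n =>
    ∑ k ∈ Finset.range (n + 1), PowerSeries.coeff k f * PowerSeries.coeff n (g ^ k)



open Finset PowerSeries

namespace ParkAux

/-- lists of length `n` with entries `< M` -/
def listFinset (n M : ℕ) : Finset (List ℕ) :=
  (Fintype.piFinset fun _ : Fin n => Finset.range M).image List.ofFn

lemma mem_listFinset {n M : ℕ} {l : List ℕ} :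
    l ∈ listFinset n M ↔ l.length = n ∧ ∀ x ∈ l, x < M := by
  constructor
  · rintro h
    simp only [listFinset, mem_image] at h
    obtain ⟨p, hp, rfl⟩ := h
    simp only [Fintype.mem_piFinset, mem_range] at hp
    constructor
    · simp
    · intro x hx
      obtain ⟨i, rfl⟩ := List.mem_ofFn.1 hx
      exact hp i
  · rintro ⟨hl, hb⟩
    simp only [listFinset, mem_image]
    subst hl
    refine ⟨l.get, ?_, List.ofFn_get l⟩
    simp only [Fintype.mem_piFinset, mem_range]
    intro i; exact hb _ (List.get_mem l i)

/-- entry of a list is at most its sum (ℕ). -/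
lemma le_sum_of_mem {l : List ℕ} {x : ℕ} (h : x ∈ l) : x ≤ l.sum := by
  induction l with
  | nil => simp at h
  | cons a t ih =>
      rcases List.mem_cons.1 h with rfl | h
      · simp
      · have := ih h; simp only [List.sum_cons]; omega

def goodProp (q n : ℕ) (l : List ℕ) : Prop :=
  l.length = n ∧ l.sum + q = n ∧ ∀ j < n, j + 1 ≤ (l.take j).sum + q

open scoped Classical in
noncomputable def Fo (q n : ℕ) : Finset (List ℕ) :=
  (listFinset n (n+1)).filter (goodProp q n)

lemma mem_Fo {q n : ℕ} {l : List ℕ} : l ∈ Fo q n ↔ goodProp q n l := by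
  classical
  simp only [Fo, mem_filter, mem_listFinset]
  constructor
  · tauto
  · intro h
    obtain ⟨h1, h2, h3⟩ := h
    refine ⟨⟨h1, fun x hx => ?_⟩, h1, h2, h3⟩
    have := le_sum_of_mem hx
    omega



lemma sum_take_le (l : List ℕ) (a : ℕ) : (l.take a).sum ≤ l.sum := by
  conv_rhs => rw [← List.take_append_drop a l]
  rw [List.sum_append]
  exact Nat.le_add_right _ _

lemma sum_take_mono (l : List ℕ) {a c : ℕ} (h : a ≤ c) :
    (l.take a).sum ≤ (l.take c).sum := by
  have : l.take a = (l.take c).take a := by rw [List.take_take, min_eq_left h]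
  rw [this]
  exact sum_take_le _ _

lemma fp_exists (l : List ℕ) : ∃ j, (l.take j).sum + 1 ≤ j :=
  ⟨l.sum + 1, by have := sum_take_le l (l.sum + 1); omega⟩

/-- first passage time -/
noncomputable def fp (l : List ℕ) : ℕ := Nat.find (fp_exists l)

lemma fp_pos (l : List ℕ) : 1 ≤ fp l := by
  rcases Nat.eq_zero_or_pos (fp l) with h | h
  · have := Nat.find_spec (fp_exists l)
    rw [show Nat.find (fp_exists l) = fp l from rfl] at this
    omega
  · exact h

lemma fp_spec (l : List ℕ) : (l.take (fp l)).sum + 1 ≤ fp l := Nat.find_spec (fp_exists l)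

lemma fp_not_lt (l : List ℕ) {j : ℕ} (h : j < fp l) : ¬ ((l.take j).sum + 1 ≤ j) :=
  Nat.find_min (fp_exists l) h

lemma fp_eq (l : List ℕ) : (l.take (fp l)).sum + 1 = fp l := by
  have hs := fp_spec l
  have hp := fp_pos l
  have hm := fp_not_lt l (show fp l - 1 < fp l by omega)
  have := sum_take_mono l (show fp l - 1 ≤ fp l by omega)
  omega

lemma fp_min (l : List ℕ) {j : ℕ} (h : j < fp l) : j ≤ (l.take j).sum := by
  have := fp_not_lt l h
  omega

lemma goodProp_split {q n : ℕ} {l : List ℕ} (h : goodProp (q + 1) n l) :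
    1 ≤ fp l ∧ fp l ≤ n ∧ goodProp 1 (fp l) (l.take (fp l)) ∧
      goodProp q (n - fp l) (l.drop (fp l)) := by
  obtain ⟨hlen, hsum, hpre⟩ := h
  have hfpn : fp l ≤ n := by
    apply Nat.find_le
    have : l.take n = l := List.take_of_length_le (by omega)
    rw [this]; omega
  have hfp := fp_eq l
  have hfpp := fp_pos l
  have hlt : (l.take (fp l)).length = fp l := by
    rw [List.length_take]; omega
  refine ⟨hfpp, hfpn, ⟨hlt, by omega, ?_⟩, ?_⟩
  · intro j hj
    rw [List.take_take, min_eq_left (by omega : j ≤ fp l)]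
    have := fp_min l (by omega : j < fp l)
    omega
  · refine ⟨by rw [List.length_drop]; omega, ?_, ?_⟩
    · have := List.sum_take_add_sum_drop l (fp l)
      omega
    · intro j hj
      have hkey : l.take (fp l + j) = l.take (fp l) ++ (l.drop (fp l)).take j := by
        rw [← List.take_add]
      have h2 := hpre (fp l + j) (by omega)
      rw [hkey, List.sum_append] at h2
      omega

lemma goodProp_append {q m₁ m₂ : ℕ} {l₁ l₂ : List ℕ}
    (h1 : goodProp 1 m₁ l₁) (h2 : goodProp q m₂ l₂) :
    goodProp (q + 1) (m₁ + m₂) (l₁ ++ l₂) ∧ fp (l₁ ++ l₂) = m₁ := by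
  obtain ⟨e1, s1, p1⟩ := h1
  obtain ⟨e2, s2, p2⟩ := h2
  have hpre : ∀ j < m₁ + m₂, j + 1 ≤ ((l₁ ++ l₂).take j).sum + (q + 1) := by
    intro j hj
    rcases lt_or_ge j m₁ with hc | hc
    · rw [List.take_append_of_le_length (by omega)]
      have := p1 j hc
      omega
    · have hj' : j - m₁ < m₂ := by omega
      have hkey : (l₁ ++ l₂).take j = l₁ ++ l₂.take (j - m₁) := by
        have hh : j = l₁.length + (j - m₁) := by omega
        conv_lhs => rw [hh]
        simp [List.take_append]
      rw [hkey, List.sum_append]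
      have := p2 (j - m₁) hj'
      omega
  have hg : goodProp (q + 1) (m₁ + m₂) (l₁ ++ l₂) :=
    ⟨by rw [List.length_append]; omega, by rw [List.sum_append]; omega, hpre⟩
  refine ⟨hg, ?_⟩
  rw [show fp (l₁ ++ l₂) = Nat.find (fp_exists (l₁ ++ l₂)) from rfl, Nat.find_eq_iff]
  constructor
  · rw [List.take_append_of_le_length (by omega), List.take_of_length_le (by omega)]
    omega
  · intro j hj
    rw [List.take_append_of_le_length (by omega)]
    have := p1 j (by omega)
    omega

section Ring
variable {R : Type*} [CommRing R] (b : ℕ → R)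

noncomputable def wt (l : List ℕ) : R := (l.map b).prod

noncomputable def A (q n : ℕ) : R := ∑ l ∈ Fo q n, wt b l

lemma Fo_zero_zero : Fo 0 0 = {[]} := by
  ext l
  rw [mem_Fo, Finset.mem_singleton]
  constructor
  · rintro ⟨h1, _, _⟩; exact List.length_eq_zero_iff.1 h1
  · rintro rfl; exact ⟨rfl, rfl, by omega⟩

lemma Fo_zero_pos {n : ℕ} (hn : 1 ≤ n) : Fo 0 n = ∅ := by
  ext l
  simp only [mem_Fo, Finset.notMem_empty, iff_false]
  rintro ⟨h1, h2, h3⟩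
  have := h3 0 (by omega)
  simp at this

lemma Fo_one_zero : Fo 1 0 = ∅ := by
  ext l
  simp only [mem_Fo, Finset.notMem_empty, iff_false]
  rintro ⟨h1, h2, _⟩
  rw [List.length_eq_zero_iff.1 h1] at h2
  simp at h2

lemma A_zero (n : ℕ) : A b 0 n = if n = 0 then 1 else 0 := by
  rcases Nat.eq_zero_or_pos n with rfl | h
  · rw [A, Fo_zero_zero]; simp [wt]
  · rw [A, Fo_zero_pos h, Finset.sum_empty, if_neg (by omega)]

lemma A_one_zero : A b 1 0 = 0 := by rw [A, Fo_one_zero]; simp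

lemma A_root (n : ℕ) :
    A b 1 (n + 1) = ∑ c ∈ Finset.range (n + 1), b c * A b c n := by
  simp only [A, Finset.mul_sum]
  rw [Finset.sum_sigma']
  refine Finset.sum_nbij' (fun l => (⟨l.headI, l.tail⟩ : (_ : ℕ) × List ℕ))
    (fun x => x.1 :: x.2) ?_ ?_ ?_ ?_ ?_
  · intro l hl
    rw [mem_Fo] at hl
    obtain ⟨e, s, p⟩ := hl
    cases l with
    | nil => simp at e
    | cons a t =>
        simp only [List.headI_cons, List.tail_cons, Finset.mem_sigma, Finset.mem_range]
        simp only [List.length_cons] at e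
        simp only [List.sum_cons] at s
        constructor
        · omega
        · rw [mem_Fo]
          refine ⟨by omega, by omega, ?_⟩
          intro j hj
          have := p (j + 1) (by omega)
          simp only [List.take_succ_cons, List.sum_cons] at this
          omega
  · rintro ⟨c, l'⟩ hmem
    simp only [Finset.mem_sigma, Finset.mem_range] at hmem
    obtain ⟨hc, hl'⟩ := hmem
    rw [mem_Fo] at hl' ⊢
    obtain ⟨e, s, p⟩ := hl'
    refine ⟨by simp [e], by simp only [List.sum_cons]; omega, ?_⟩
    intro j hj
    cases j with
    | zero => simp
    | succ j' =>
        have := p j' (by omega)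
        simp only [List.take_succ_cons, List.sum_cons]
        omega
  · intro l hl
    rw [mem_Fo] at hl
    obtain ⟨e, s, p⟩ := hl
    cases l with
    | nil => simp at e
    | cons a t => simp
  · rintro ⟨c, l'⟩ _
    simp
  · intro l hl
    rw [mem_Fo] at hl
    obtain ⟨e, s, p⟩ := hl
    cases l with
    | nil => simp at e
    | cons a t => simp only [List.headI_cons, List.tail_cons, wt, List.map_cons, List.prod_cons]

lemma A_split (q n : ℕ) :
    A b (q + 1) n = ∑ mm ∈ Finset.HasAntidiagonal.antidiagonal n, A b 1 mm.1 * A b q mm.2 := by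
  rw [← Finset.sum_filter_of_ne
    (p := fun mm : ℕ × ℕ => 1 ≤ mm.1) (f := fun mm => A b 1 mm.1 * A b q mm.2)]
  swap
  · intro mm _ hne
    by_contra hc
    push_neg at hc
    have h0 : mm.1 = 0 := by omega
    rw [h0, A_one_zero, zero_mul] at hne
    exact hne rfl
  have hinner : ∀ mm : ℕ × ℕ, A b 1 mm.1 * A b q mm.2 =
      ∑ ll ∈ Fo 1 mm.1 ×ˢ Fo q mm.2, wt b ll.1 * wt b ll.2 := by
    intro mm
    rw [A, A, Finset.sum_mul_sum, ← Finset.sum_product']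
  simp only [hinner]
  rw [Finset.sum_sigma']
  rw [A]
  refine Finset.sum_nbij'
    (fun l => (⟨(fp l, n - fp l), (l.take (fp l), l.drop (fp l))⟩ :
      (_ : ℕ × ℕ) × (List ℕ × List ℕ)))
    (fun x => x.2.1 ++ x.2.2) ?_ ?_ ?_ ?_ ?_
  · intro l hl
    rw [mem_Fo] at hl
    obtain ⟨h1, h2, h3, h4⟩ := goodProp_split hl
    simp only [Finset.mem_sigma, Finset.mem_filter, Finset.HasAntidiagonal.mem_antidiagonal, Finset.mem_product]
    exact ⟨⟨by omega, h1⟩, mem_Fo.2 h3, mem_Fo.2 h4⟩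
  · rintro ⟨⟨m₁, m₂⟩, l₁, l₂⟩ hmem
    simp only [Finset.mem_sigma, Finset.mem_filter, Finset.HasAntidiagonal.mem_antidiagonal,
      Finset.mem_product, mem_Fo] at hmem
    obtain ⟨⟨hmm, hm1⟩, h1, h2⟩ := hmem
    rw [mem_Fo]
    have := (goodProp_append h1 h2).1
    rwa [hmm] at this
  · intro l hl
    exact List.take_append_drop _ _
  · rintro ⟨⟨m₁, m₂⟩, l₁, l₂⟩ hmem
    simp only [Finset.mem_sigma, Finset.mem_filter, Finset.HasAntidiagonal.mem_antidiagonal,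
      Finset.mem_product, mem_Fo] at hmem
    obtain ⟨⟨hmm, hm1⟩, h1, h2⟩ := hmem
    have hfp := (goodProp_append h1 h2).2
    have hlen : l₁.length = m₁ := h1.1
    have ht : (l₁ ++ l₂).take (fp (l₁ ++ l₂)) = l₁ := by
      rw [hfp, ← hlen, List.take_left]
    have hd : (l₁ ++ l₂).drop (fp (l₁ ++ l₂)) = l₂ := by
      rw [hfp, ← hlen, List.drop_left]
    simp only [Sigma.mk.inj_iff, heq_iff_eq, Prod.mk.injEq]
    exact ⟨⟨by rw [hfp], by rw [hfp]; omega⟩, ht, hd⟩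
  · intro l hl
    simp only [wt]
    conv_lhs => rw [← List.take_append_drop (fp l) l]
    rw [List.map_append, List.prod_append]

end Ring

section Helpers

lemma sum_map_range (f : ℕ → ℕ) (n : ℕ) :
    ((List.range n).map f).sum = ∑ i ∈ Finset.range n, f i := by
  induction n with
  | zero => simp
  | succ n ih => rw [List.range_succ]; simp [ih, Finset.sum_range_succ]

lemma prod_map_range {R : Type*} [CommMonoid R] (f : ℕ → R) (n : ℕ) :
    ((List.range n).map f).prod = ∏ i ∈ Finset.range n, f i := by
  induction n with
  | zero => simp
  | succ n ih => rw [List.range_succ]; simp [ih, Finset.prod_range_succ]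

lemma take_map_range (g : ℕ → ℕ) {j n : ℕ} (h : j ≤ n) :
    ((List.range n).map g).take j = (List.range j).map g := by
  rw [← List.map_take, List.take_range, min_eq_left h]

lemma sum_take_getD (l : List ℕ) {j : ℕ} (h : j ≤ l.length) :
    (l.take j).sum = ∑ i ∈ Finset.range j, l.getD i 0 := by
  induction j with
  | zero => simp
  | succ j ih =>
      rw [List.sum_take_succ l j (by omega), ih (by omega), Finset.sum_range_succ,
        List.getD_eq_getElem l 0 (by omega)]

lemma sum_getD (l : List ℕ) : l.sum = ∑ i ∈ Finset.range l.length, l.getD i 0 := by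
  rw [← sum_take_getD l le_rfl, List.take_length]

lemma sum_Icc_one (f : ℕ → ℕ) (n : ℕ) :
    ∑ i ∈ Finset.Icc 1 n, f i = ∑ i ∈ Finset.range n, f (i + 1) := by
  rw [← Finset.Ico_add_one_right_eq_Icc, Finset.sum_Ico_eq_sum_range]
  exact Finset.sum_congr (by norm_num) fun i _ => by rw [add_comm]

lemma prod_Icc_one {R : Type*} [CommMonoid R] (f : ℕ → R) (n : ℕ) :
    ∏ i ∈ Finset.Icc 1 n, f i = ∏ i ∈ Finset.range n, f (i + 1) := by
  rw [← Finset.Ico_add_one_right_eq_Icc, Finset.prod_Ico_eq_prod_range]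
  exact Finset.prod_congr (by norm_num) fun i _ => by rw [add_comm]

end Helpers

section Parking

lemma sum_content {n j : ℕ} {p : Fin n → ℕ}
    (hp : p ∈ Fintype.piFinset fun _ : Fin n => Finset.Icc 1 n) (hj : j ≤ n) :
    (Finset.univ.filter fun i => p i ≤ j).card = ∑ i ∈ Finset.Icc 1 j, content p i := by
  classical
  rw [Finset.card_eq_sum_card_fiberwise
    (f := p) (t := Finset.Icc 1 j) ?_]
  · refine Finset.sum_congr rfl fun i hi => ?_
    rw [Finset.mem_Icc] at hi
    rw [content]
    congr 1
    ext x
    simp only [Finset.mem_filter, Finset.mem_univ, true_and]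
    constructor
    · tauto
    · intro hx; exact ⟨by omega, hx⟩
  · intro x hx
    simp only [Finset.coe_filter, Set.mem_setOf_eq, Finset.mem_univ, true_and] at hx
    simp only [Fintype.mem_piFinset, Finset.mem_Icc] at hp
    have := hp x
    rw [Finset.mem_coe, Finset.mem_Icc]
    omega

lemma content_sum {n : ℕ} {p : Fin n → ℕ}
    (hp : p ∈ Fintype.piFinset fun _ : Fin n => Finset.Icc 1 n) :
    ∑ i ∈ Finset.Icc 1 n, content p i = n := by
  classical
  have h := sum_content hp (le_refl n)
  rw [← h]
  have : (Finset.univ.filter fun i : Fin n => p i ≤ n) = Finset.univ := by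
    ext x
    simp only [Finset.mem_filter, Finset.mem_univ, true_and, iff_true]
    simp only [Fintype.mem_piFinset, Finset.mem_Icc] at hp
    exact (hp x).2
  rw [this, Finset.card_univ, Fintype.card_fin]

lemma content_mem_piAntidiag {n : ℕ} {p : Fin n → ℕ}
    (hp : p ∈ Fintype.piFinset fun _ : Fin n => Finset.Icc 1 n) :
    content p ∈ Finset.piAntidiag (Finset.Icc 1 n) n := by
  rw [Finset.mem_piAntidiag]
  refine ⟨content_sum hp, fun i hi => ?_⟩
  rw [content] at hi
  have : (Finset.univ.filter fun j => p j = i).Nonempty := by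
    rw [← Finset.card_pos]; omega
  obtain ⟨j, hj⟩ := this
  simp only [Finset.mem_filter] at hj
  simp only [Fintype.mem_piFinset] at hp
  rw [← hj.2]
  exact hp j

lemma isParking_iff_content {n : ℕ} {p : Fin n → ℕ}
    (hp : p ∈ Fintype.piFinset fun _ : Fin n => Finset.Icc 1 n) :
    IsParking p ↔ ∀ j ∈ Finset.Icc 1 n, j ≤ ∑ i ∈ Finset.Icc 1 j, content p i := by
  unfold IsParking
  apply forall_congr'
  intro j
  constructor
  · intro h hj
    have hjn : j ≤ n := (Finset.mem_Icc.1 hj).2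
    rw [← sum_content hp hjn]
    exact h hj
  · intro h hj
    have hjn : j ≤ n := (Finset.mem_Icc.1 hj).2
    rw [sum_content hp hjn]
    exact h hj

end Parking

section Count
open MvPolynomial

noncomputable def Phi (s : Finset ℕ) (k : ℕ → ℕ) : ℕ →₀ ℕ :=
  ∑ i ∈ s, Finsupp.single i (k i)

lemma Phi_apply (s : Finset ℕ) (k : ℕ → ℕ) (i : ℕ) :
    Phi s k i = if i ∈ s then k i else 0 := by
  classical
  rw [Phi, Finset.sum_apply']
  rw [Finset.sum_congr rfl fun i' _ => Finsupp.single_apply]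
  exact Finset.sum_ite_eq' s i k

lemma Phi_inj {s : Finset ℕ} {k₁ k₂ : ℕ → ℕ} (h1 : ∀ i, k₁ i ≠ 0 → i ∈ s)
    (h2 : ∀ i, k₂ i ≠ 0 → i ∈ s) (h : Phi s k₁ = Phi s k₂) : k₁ = k₂ := by
  funext i
  have := DFunLike.congr_fun h i
  rw [Phi_apply, Phi_apply] at this
  by_cases hi : i ∈ s
  · rwa [if_pos hi, if_pos hi] at this
  · have e1 : k₁ i = 0 := by by_contra hne; exact hi (h1 i hne)
    have e2 : k₂ i = 0 := by by_contra hne; exact hi (h2 i hne)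
    rw [e1, e2]

lemma prod_X_pow_Phi (s : Finset ℕ) (k : ℕ → ℕ) :
    ∏ i ∈ s, (X i : MvPolynomial ℕ ℕ) ^ k i = monomial (Phi s k) 1 := by
  classical
  induction s using Finset.cons_induction with
  | empty => simp [Phi, monomial_zero']
  | cons a t ha ih =>
      have hP : Phi (Finset.cons a t ha) k = Finsupp.single a (k a) + Phi t k := by
        rw [Phi, Phi, Finset.sum_cons]
      rw [Finset.prod_cons, ih, hP, X_pow_eq_monomial, monomial_mul, mul_one]

lemma card_content_fiber {n : ℕ} {c : ℕ → ℕ}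
    [DecidablePred fun p : Fin n → ℕ => content p = c]
    (hc : c ∈ Finset.piAntidiag (Finset.Icc 1 n) n) :
    ((Fintype.piFinset fun _ : Fin n => Finset.Icc 1 n).filter fun p => content p = c).card
      = Nat.multinomial (Finset.Icc 1 n) c := by
  classical
  set s := Finset.Icc 1 n with hs
  have E2 : ((∑ i ∈ s, X i : MvPolynomial ℕ ℕ)) ^ n
      = ∑ p ∈ Fintype.piFinset (fun _ : Fin n => s), monomial (Phi s (content p)) 1 := by
    calc (∑ i ∈ s, (X i : MvPolynomial ℕ ℕ)) ^ n
        = ∏ _j : Fin n, (∑ i ∈ s, (X i : MvPolynomial ℕ ℕ)) := by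
          rw [Finset.prod_const, Finset.card_univ, Fintype.card_fin]
      _ = ∑ p ∈ Fintype.piFinset (fun _ : Fin n => s),
            ∏ j : Fin n, (X (p j) : MvPolynomial ℕ ℕ) := by
          rw [Finset.prod_univ_sum]
      _ = ∑ p ∈ Fintype.piFinset (fun _ : Fin n => s), monomial (Phi s (content p)) 1 := by
          refine Finset.sum_congr rfl fun p hp => ?_
          rw [← prod_X_pow_Phi]
          rw [← Finset.prod_fiberwise_of_maps_to (g := p) (t := s)
            (fun x _ => by simpa using (Fintype.mem_piFinset.1 hp) x)
            (fun j => (X (p j) : MvPolynomial ℕ ℕ))]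
          refine Finset.prod_congr rfl fun i _ => ?_
          rw [content, Finset.prod_congr rfl
            (fun x hx => by rw [(Finset.mem_filter.1 hx).2]), Finset.prod_const]
  have E1 := Finset.sum_pow_eq_sum_piAntidiag s (fun i => (X i : MvPolynomial ℕ ℕ)) n
  have key := congrArg (coeff (Phi s c)) (E2.symm.trans E1)
  rw [coeff_sum, coeff_sum] at key
  have hcsup : ∀ i, c i ≠ 0 → i ∈ s := (Finset.mem_piAntidiag.1 hc).2
  have lhs_eq : ∑ p ∈ Fintype.piFinset (fun _ : Fin n => s),
      coeff (Phi s c) (monomial (Phi s (content p)) 1)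
      = ((Fintype.piFinset fun _ : Fin n => s).filter fun p => content p = c).card := by
    rw [Finset.card_filter]
    push_cast
    refine Finset.sum_congr rfl fun p hp => ?_
    rw [MvPolynomial.coeff_monomial]
    have hpsup : ∀ i, content p i ≠ 0 → i ∈ s :=
      (Finset.mem_piAntidiag.1 (content_mem_piAntidiag hp)).2
    by_cases hec : content p = c
    · rw [if_pos (by rw [hec]), if_pos hec]
    · rw [if_neg (fun hPhi => hec (Phi_inj hpsup hcsup hPhi)), if_neg hec]
  have step : ∀ k ∈ Finset.piAntidiag s n,
      coeff (Phi s c) ((Nat.multinomial s k : MvPolynomial ℕ ℕ) * ∏ i ∈ s, X i ^ k i)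
        = Nat.multinomial s k * (if Phi s k = Phi s c then 1 else 0) := by
    intro k _
    rw [prod_X_pow_Phi, ← C_eq_coe_nat, MvPolynomial.coeff_C_mul,
      MvPolynomial.coeff_monomial, Nat.cast_id]
  have rhs_eq : ∑ k ∈ Finset.piAntidiag s n,
      coeff (Phi s c) ((Nat.multinomial s k : MvPolynomial ℕ ℕ) * ∏ i ∈ s, X i ^ k i)
      = Nat.multinomial s c := by
    rw [Finset.sum_congr rfl step]
    rw [Finset.sum_eq_single_of_mem c hc]
    · rw [if_pos rfl, mul_one]
    · intro k hk hne
      have hksup : ∀ i, k i ≠ 0 → i ∈ s := (Finset.mem_piAntidiag.1 hk).2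
      rw [if_neg (fun hPhi => hne (Phi_inj hksup hcsup hPhi)), mul_zero]
  rw [lhs_eq, rhs_eq] at key
  exact key

end Count

section Ring2
variable {R : Type*} [CommRing R] (b : ℕ → R)

noncomputable def f₀ : PowerSeries R := PowerSeries.mk fun m => A b 1 m

lemma A_pow (q n : ℕ) : A b q n = PowerSeries.coeff n ((f₀ b) ^ q) := by
  induction q generalizing n with
  | zero => rw [pow_zero, PowerSeries.coeff_one, A_zero]
  | succ q ih =>
      rw [pow_succ', PowerSeries.coeff_mul, A_split]
      refine Finset.sum_congr rfl fun mm _ => ?_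
      rw [← ih, f₀, PowerSeries.coeff_mk]

lemma coeff_pow_congr {F G : PowerSeries R} (n : ℕ)
    (h : ∀ j ≤ n, PowerSeries.coeff j F = PowerSeries.coeff j G) (q : ℕ) :
    ∀ j ≤ n, PowerSeries.coeff j (F ^ q) = PowerSeries.coeff j (G ^ q) := by
  induction q with
  | zero => intro j _; rfl
  | succ q ih =>
      intro j hj
      rw [pow_succ, pow_succ, PowerSeries.coeff_mul, PowerSeries.coeff_mul]
      refine Finset.sum_congr rfl fun p hp => ?_
      rw [Finset.HasAntidiagonal.mem_antidiagonal] at hp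
      rw [ih p.1 (by omega), h p.2 (by omega)]

/-- uniqueness: any fixed point of `F = X * psComp B F` with zero constant term
has coefficients `A b 1 m` where `b = coeff B`. -/
lemma coeff_fixedPoint (B : PowerSeries R) {F : PowerSeries R}
    (hF0 : PowerSeries.constantCoeff F = 0)
    (hFH : F = PowerSeries.X * psComp B F) (m : ℕ) :
    PowerSeries.coeff m F = A (fun i => PowerSeries.coeff i B) 1 m := by
  set b : ℕ → R := fun i => PowerSeries.coeff i B with hb
  suffices h : ∀ n, ∀ j ≤ n, PowerSeries.coeff j F = A b 1 j from h m m le_rfl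
  intro n
  induction n with
  | zero =>
      intro j hj
      interval_cases j
      rw [PowerSeries.coeff_zero_eq_constantCoeff, hF0, A_one_zero]
  | succ n ih =>
      intro j hj
      rcases Nat.lt_or_ge j (n + 1) with hlt | hge
      · exact ih j (by omega)
      · have hj' : j = n + 1 := by omega
        subst hj'
        conv_lhs => rw [hFH]
        rw [PowerSeries.coeff_succ_X_mul, psComp, PowerSeries.coeff_mk, A_root]
        refine Finset.sum_congr rfl fun c hc => ?_
        congr 1
        rw [A_pow]
        refine (coeff_pow_congr n ?_ c n le_rfl).symm
        intro i hi
        rw [f₀, PowerSeries.coeff_mk]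
        exact (ih i hi).symm

open scoped Classical in
/-- lists of length `n`, sum `n`, all prefix sums at least their length -/
noncomputable def Sf (n : ℕ) : Finset (List ℕ) :=
  (listFinset n (n + 1)).filter fun l => l.sum = n ∧ ∀ j < n, j ≤ (l.take j).sum

lemma mem_Sf {n : ℕ} {l : List ℕ} :
    l ∈ Sf n ↔ l.length = n ∧ l.sum = n ∧ ∀ j < n, j ≤ (l.take j).sum := by
  classical
  simp only [Sf, Finset.mem_filter, mem_listFinset]
  constructor
  · tauto
  · rintro ⟨h1, h2, h3⟩
    refine ⟨⟨h1, fun x hx => ?_⟩, h2, h3⟩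
    have := le_sum_of_mem hx
    omega

lemma A_one_succ (hb0 : b 0 = 1) (n : ℕ) :
    A b 1 (n + 1) = ∑ l ∈ Sf n, wt b l := by
  rw [A]
  refine Finset.sum_nbij' (fun l => l.take n) (fun l => l ++ [0]) ?_ ?_ ?_ ?_ ?_
  · intro l hl
    rw [mem_Fo] at hl
    obtain ⟨e, s, p⟩ := hl
    have hto : (l.take n).sum = n := by
      have h1 := p n (by omega)
      have h2 := sum_take_le l n
      omega
    rw [mem_Sf]
    refine ⟨by rw [List.length_take]; omega, hto, ?_⟩
    intro j hj
    rw [List.take_take, min_eq_left (by omega : j ≤ n)]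
    have := p j (by omega)
    omega
  · intro l hl
    rw [mem_Sf] at hl
    obtain ⟨e, s, p⟩ := hl
    rw [mem_Fo]
    refine ⟨by simp [e], by rw [List.sum_append]; simp; omega, ?_⟩
    intro j hj
    rcases Nat.lt_or_ge j n with h | h
    · rw [List.take_append_of_le_length (by omega)]
      have := p j h
      omega
    · have hjn : j = n := by omega
      subst hjn
      rw [List.take_append_of_le_length (by omega), List.take_of_length_le (by omega)]
      omega
  · intro l hl
    rw [mem_Fo] at hl
    obtain ⟨e, s, p⟩ := hl
    have hto : (l.take n).sum = n := by
      have h1 := p n (by omega)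
      have h2 := sum_take_le l n
      omega
    have hdlen : (l.drop n).length = 1 := by rw [List.length_drop]; omega
    obtain ⟨a, ha⟩ := List.length_eq_one_iff.1 hdlen
    have hsum := List.sum_take_add_sum_drop l n
    rw [ha] at hsum
    simp only [List.sum_cons, List.sum_nil] at hsum
    have ha0 : a = 0 := by omega
    show l.take n ++ [0] = l
    conv_rhs => rw [← List.take_append_drop n l, ha, ha0]
  · intro l hl
    rw [mem_Sf] at hl
    show (l ++ [0]).take n = l
    rw [List.take_append_of_le_length (by omega), List.take_of_length_le (by omega)]
  · intro l hl
    rw [mem_Fo] at hl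
    obtain ⟨e, s, p⟩ := hl
    have hto : (l.take n).sum = n := by
      have h1 := p n (by omega)
      have h2 := sum_take_le l n
      omega
    have hdlen : (l.drop n).length = 1 := by rw [List.length_drop]; omega
    obtain ⟨a, ha⟩ := List.length_eq_one_iff.1 hdlen
    have hsum := List.sum_take_add_sum_drop l n
    rw [ha] at hsum
    simp only [List.sum_cons, List.sum_nil] at hsum
    have ha0 : a = 0 := by omega
    conv_lhs => rw [← List.take_append_drop n l, ha, ha0]
    rw [wt, wt, List.map_append, List.prod_append]
    simp [hb0]

noncomputable def predSet (n : ℕ) : Finset (ℕ → ℕ) :=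
  @Finset.filter _ (fun c : ℕ → ℕ => ∀ j ∈ Finset.Icc 1 n, j ≤ ∑ i ∈ Finset.Icc 1 j, c i)
    (fun _ => Finset.decidableDforallFinset) (Finset.piAntidiag (Finset.Icc 1 n) n)

lemma mem_predSet {n : ℕ} {c : ℕ → ℕ} :
    c ∈ predSet n ↔ c ∈ Finset.piAntidiag (Finset.Icc 1 n) n ∧
      ∀ j ∈ Finset.Icc 1 n, j ≤ ∑ i ∈ Finset.Icc 1 j, c i :=
  Finset.mem_filter

lemma parking_sum (n : ℕ) :
    ∑ p ∈ parkFinset n, ∏ i ∈ Finset.Icc 1 n,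
        ((content p i).factorial : R) * b (content p i)
      = (n.factorial : R) *
        ∑ c ∈ predSet n, ∏ i ∈ Finset.Icc 1 n, b (c i) := by
  classical
  have hmap : ∀ p ∈ parkFinset n, content p ∈ predSet n := by
    intro p hp
    obtain ⟨hpi, hpark⟩ := Finset.mem_filter.1 hp
    exact mem_predSet.2 ⟨content_mem_piAntidiag hpi, (isParking_iff_content hpi).1 hpark⟩
  rw [← Finset.sum_fiberwise_of_maps_to hmap
    (fun p => ∏ i ∈ Finset.Icc 1 n, ((content p i).factorial : R) * b (content p i))]
  rw [Finset.mul_sum]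
  refine Finset.sum_congr rfl fun c hc => ?_
  obtain ⟨hcpi, hcpred⟩ := mem_predSet.1 hc
  have hfib : (parkFinset n).filter (fun p => content p = c)
      = (Fintype.piFinset fun _ : Fin n => Finset.Icc 1 n).filter
          (fun p => content p = c) := by
    ext p
    simp only [Finset.mem_filter, parkFinset]
    constructor
    · rintro ⟨⟨hpi, _⟩, hcc⟩; exact ⟨hpi, hcc⟩
    · rintro ⟨hpi, hcc⟩
      refine ⟨⟨hpi, (isParking_iff_content hpi).2 ?_⟩, hcc⟩
      rw [hcc]
      exact hcpred
  have hconst : ∀ p ∈ (parkFinset n).filter (fun p => content p = c),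
      (∏ i ∈ Finset.Icc 1 n, ((content p i).factorial : R) * b (content p i))
        = ∏ i ∈ Finset.Icc 1 n, ((c i).factorial : R) * b (c i) := by
    intro p hp
    rw [(Finset.mem_filter.1 hp).2]
  rw [Finset.sum_congr rfl hconst, Finset.sum_const, hfib, card_content_fiber hcpi]
  rw [Finset.prod_mul_distrib, ← Nat.cast_prod, nsmul_eq_mul, ← mul_assoc, ← Nat.cast_mul]
  have hnf : Nat.multinomial (Finset.Icc 1 n) c * ∏ i ∈ Finset.Icc 1 n, (c i).factorial
      = n.factorial := by
    rw [mul_comm, Nat.multinomial_spec, (Finset.mem_piAntidiag.1 hcpi).1]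
  rw [hnf]

lemma pred_sum_eq (n : ℕ) :
    ∑ c ∈ predSet n, ∏ i ∈ Finset.Icc 1 n, b (c i) = ∑ l ∈ Sf n, wt b l := by
  refine Finset.sum_nbij' (fun c => (List.range n).map fun i => c (i + 1))
    (fun l => fun i => if i ∈ Finset.Icc 1 n then l.getD (i - 1) 0 else 0) ?_ ?_ ?_ ?_ ?_
  · intro c hc
    obtain ⟨hcpi, hcpred⟩ := mem_predSet.1 hc
    obtain ⟨hcsum, hcsup⟩ := Finset.mem_piAntidiag.1 hcpi
    rw [mem_Sf]
    have hsum : ((List.range n).map fun i => c (i + 1)).sum = n := by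
      rw [sum_map_range, ← sum_Icc_one, hcsum]
    refine ⟨by simp, hsum, ?_⟩
    intro j hj
    rw [take_map_range _ (by omega : j ≤ n), sum_map_range, ← sum_Icc_one]
    rcases Nat.eq_zero_or_pos j with rfl | hj1
    · omega
    · exact hcpred j (Finset.mem_Icc.2 ⟨hj1, by omega⟩)
  · intro l hl
    obtain ⟨hlen, hsum, hpre⟩ := mem_Sf.1 hl
    rw [mem_predSet, Finset.mem_piAntidiag]
    have hIccsum : ∀ j ≤ n, ∑ i ∈ Finset.Icc 1 j,
        (if i ∈ Finset.Icc 1 n then l.getD (i - 1) 0 else 0) = (l.take j).sum := by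
      intro j hjn
      rw [sum_Icc_one, sum_take_getD l (by omega)]
      refine Finset.sum_congr rfl fun i hi => ?_
      rw [Finset.mem_range] at hi
      rw [if_pos (Finset.mem_Icc.2 ⟨by omega, by omega⟩)]
      simp
    refine ⟨⟨?_, ?_⟩, ?_⟩
    · rw [hIccsum n le_rfl, ← hlen, List.take_length, hsum]
      exact hlen.symm
    · intro i hi
      by_contra hmem
      rw [if_neg hmem] at hi
      exact hi rfl
    · intro j hj
      rw [Finset.mem_Icc] at hj
      rw [hIccsum j (by omega)]
      rcases Nat.lt_or_ge j n with h | h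
      · exact hpre j h
      · have hjn : j = n := by omega
        subst hjn
        rw [← hlen, List.take_length, hsum, hlen]
  · intro c hc
    obtain ⟨hcpi, _⟩ := mem_predSet.1 hc
    obtain ⟨_, hcsup⟩ := Finset.mem_piAntidiag.1 hcpi
    funext i
    by_cases hi : i ∈ Finset.Icc 1 n
    · rw [if_pos hi]
      rw [Finset.mem_Icc] at hi
      have hlt : i - 1 < ((List.range n).map fun i => c (i + 1)).length := by simp; omega
      rw [List.getD_eq_getElem _ _ hlt]
      simp only [List.getElem_map, List.getElem_range]
      congr 1
      omega
    · rw [if_neg hi]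
      by_contra hne
      exact hi (hcsup i fun h0 => hne h0.symm)
  · intro l hl
    obtain ⟨hlen, _, _⟩ := mem_Sf.1 hl
    apply List.ext_getElem
    · simp [hlen]
    · intro i h1 h2
      dsimp only
      simp only [List.getElem_map, List.getElem_range]
      rw [List.length_map, List.length_range] at h1
      rw [if_pos (Finset.mem_Icc.2 ⟨by omega, by omega⟩)]
      simp only [Nat.add_sub_cancel]
      rw [List.getD_eq_getElem _ _ (by omega)]
  · intro c hc
    rw [wt, List.map_map, prod_map_range, prod_Icc_one]
    rfl

end Ring2







end ParkAux

/-- If `F = t·H(F)^k`, i.e. `F = t·PF^{(k)}(t)` is the compositional inverse of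
`t/H(t)^k`, so `coeff_{t^{n+1}} F = PF_n^{(k)}` is the Frobenius characteristic of the
`k`-parking function module, then `n!·PF_n^{(k)} = Σ_{p ∈ park(n)} Π_{i=1}^n c_i(p)!·b_{c_i(p)}`
where `b_m` is the coefficient of `t^m` in `H(t)^k`
(the umbral equivalence `V_n(k.θ̄_1,…,k.θ̄_n) ≃ PF_n^{(k)}`). -/
theorem volume_k_dot_theta (N : ℕ) (hN : 1 ≤ N) (k : ℕ) (hk : 1 ≤ k)
    (H F : PowerSeries (MvPolynomial (Fin N) ℚ))
    (hH : ∀ m, PowerSeries.coeff m H =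
      if m = 0 then 1 else MvPolynomial.hsymm (Fin N) ℚ m)
    (hF0 : PowerSeries.constantCoeff F = 0)
    (hFH : F = PowerSeries.X * psComp (H ^ k) F) :
    ∀ n, 1 ≤ n →
      (n.factorial : MvPolynomial (Fin N) ℚ) * PowerSeries.coeff (n + 1) F =
        ∑ p ∈ parkFinset n, ∏ i ∈ Finset.Icc 1 n,
          ((content p i).factorial : MvPolynomial (Fin N) ℚ) *
            PowerSeries.coeff (content p i) (H ^ k) := by
  intro n hn
  have hb0 : PowerSeries.coeff 0 (H ^ k) = 1 := by
    rw [PowerSeries.coeff_zero_eq_constantCoeff, map_pow]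
    have h1 : PowerSeries.constantCoeff H = 1 := by
      have h0 := hH 0
      rwa [if_pos rfl, PowerSeries.coeff_zero_eq_constantCoeff] at h0
    rw [h1, one_pow]
  have hcoeff := ParkAux.coeff_fixedPoint (H ^ k) hF0 hFH (n + 1)
  rw [hcoeff,
    ParkAux.A_one_succ (fun i => PowerSeries.coeff i (H ^ k)) hb0 n,
    ParkAux.parking_sum (fun i => PowerSeries.coeff i (H ^ k)) n,
    ParkAux.pred_sum_eq (fun i => PowerSeries.coeff i (H ^ k)) n]
end

section
/- Let R be a commutative ring and a : ℕ → R a sequence with a(0) = 1. Then for every n ≥ 1: Σ_{p} Π_{i=1}^{n} a(c_i(p)) = Σ_{μ ⊢ n} (n! · (n)_{ℓ(μ)} / (m(μ)!·μ!)) · Π_{j=1}^{ℓ(μ)} a(μ_j), where the left sum ranges over all functions p from {1,...,n} to {1,...,n} and the right sum over all integer partitions μ of n, and the coefficient n!·(n)_{ℓ(μ)}/(m(μ)!·μ!) is a nonnegative integer. (This expresses the umbral equivalence n!·V_n^B(θ̄_1,...,θ̄_n) ≃ B_n(−1.θ̄, −1.θ̄) for the type B volume polynomial V_n^B and the type B Abel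 polynomial B_n(x,α) = (x − (n+1).α)^n, valid for arbitrary similar uncorrelated umbrae.) -/
section Aux

lemma umbral_map_univ_succ {n : ℕ} {β : Type*} (f : Fin (n+1) → β) :
    Multiset.map f Finset.univ.val = f 0 ::ₘ Multiset.map (Fin.tail f) Finset.univ.val := by
  rw [Fin.univ_succ]
  simp only [Finset.cons_val, Multiset.map_cons, Finset.map_val, Multiset.map_map]
  rfl

lemma umbral_core {β : Type*} [DecidableEq β] :
    ∀ (n : ℕ) (ν : Multiset β), Multiset.card ν = n →
    ((Fintype.piFinset fun _ : Fin n => ν.toFinset).filter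
        (fun f => Multiset.map f Finset.univ.val = ν)).card
      * ∏ v ∈ ν.toFinset, (ν.count v).factorial = n.factorial := by
  intro n
  induction n with
  | zero =>
    intro ν hν
    rw [Multiset.card_eq_zero] at hν
    subst hν
    simp
  | succ n ih =>
    intro ν hν
    set F := ((Fintype.piFinset fun _ : Fin (n+1) => ν.toFinset).filter
        (fun f => Multiset.map f Finset.univ.val = ν)) with hF
    have hcard : F.card = ∑ v ∈ ν.toFinset, (F.filter fun f => f 0 = v).card := by
      apply Finset.card_eq_sum_card_fiberwise
      intro f hf
      rw [hF, Finset.mem_coe, Finset.mem_filter] at hf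
      have : f 0 ∈ Multiset.map f Finset.univ.val := Multiset.mem_map_of_mem f (Finset.mem_univ_val _)
      rw [hf.2] at this
      exact Multiset.mem_toFinset.2 this
    have hfiber : ∀ v ∈ ν.toFinset, (F.filter fun f => f 0 = v).card =
        ((Fintype.piFinset fun _ : Fin n => (ν.erase v).toFinset).filter
          (fun f => Multiset.map f Finset.univ.val = ν.erase v)).card := by
      intro v hv
      apply Finset.card_bij (fun f _ => Fin.tail f)
      · intro f hf
        rw [Finset.mem_filter, hF, Finset.mem_filter] at hf
        obtain ⟨⟨_, hms⟩, h0⟩ := hf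
        have htail : Multiset.map (Fin.tail f) Finset.univ.val = ν.erase v := by
          have := umbral_map_univ_succ f
          rw [hms, h0] at this
          rw [← Multiset.cons_erase (Multiset.mem_toFinset.1 hv)] at this
          exact (Multiset.cons_inj_right v).1 this.symm
        rw [Finset.mem_filter]
        refine ⟨Fintype.mem_piFinset.2 fun i => ?_, htail⟩
        rw [Multiset.mem_toFinset, ← htail]
        exact Multiset.mem_map_of_mem _ (Finset.mem_univ_val _)
      · intro f hf g hg hfg
        rw [Finset.mem_filter] at hf hg
        funext i
        refine Fin.cases ?_ ?_ i
        · rw [hf.2, hg.2]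
        · intro j; exact congrFun hfg j
      · intro g hg
        rw [Finset.mem_filter] at hg
        refine ⟨Fin.cons v g, ?_, ?_⟩
        · rw [Finset.mem_filter, hF, Finset.mem_filter]
          refine ⟨⟨Fintype.mem_piFinset.2 fun i => ?_, ?_⟩, ?_⟩
          · refine Fin.cases ?_ ?_ i
            · simpa using hv
            · intro j
              simp only [Fin.cons_succ]
              have := Fintype.mem_piFinset.1 hg.1 j
              rw [Multiset.mem_toFinset] at this ⊢
              exact Multiset.mem_of_mem_erase this
          · rw [umbral_map_univ_succ]
            simp only [Fin.cons_zero, Fin.tail_cons]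
            rw [hg.2]
            exact Multiset.cons_erase (Multiset.mem_toFinset.1 hv)
          · simp
        · funext j; simp [Fin.tail]
    have hprod : ∀ v ∈ ν.toFinset,
        ∏ w ∈ ν.toFinset, (ν.count w).factorial =
          ν.count v * ∏ w ∈ (ν.erase v).toFinset, ((ν.erase v).count w).factorial := by
      intro v hv
      have hvpos : 0 < ν.count v := Multiset.count_pos.2 (Multiset.mem_toFinset.1 hv)
      have hsub : (ν.erase v).toFinset ⊆ ν.toFinset := by
        intro w hw
        rw [Multiset.mem_toFinset] at hw ⊢
        exact Multiset.mem_of_mem_erase hw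
      have h2 : ∏ w ∈ (ν.erase v).toFinset, ((ν.erase v).count w).factorial =
          ∏ w ∈ ν.toFinset, ((ν.erase v).count w).factorial := by
        apply Finset.prod_subset hsub
        intro w _ hw
        rw [Multiset.mem_toFinset] at hw
        simp [Multiset.count_eq_zero_of_notMem hw]
      rw [h2, ← Finset.mul_prod_erase _ _ hv, ← Finset.mul_prod_erase _ (fun w => ((ν.erase v).count w).factorial) hv]
      have h3 : ∏ w ∈ ν.toFinset.erase v, ((ν.erase v).count w).factorial =
          ∏ w ∈ ν.toFinset.erase v, (ν.count w).factorial := by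
        apply Finset.prod_congr rfl
        intro w hw
        rw [Multiset.count_erase_of_ne (Finset.ne_of_mem_erase hw)]
      have hfac : (ν.count v).factorial = ν.count v * (ν.count v - 1).factorial :=
        (Nat.mul_factorial_pred hvpos.ne').symm
      rw [h3, Multiset.count_erase_self, hfac, mul_assoc]
    rw [hcard, Finset.sum_mul]
    have : ∀ v ∈ ν.toFinset,
        (F.filter fun f => f 0 = v).card * ∏ w ∈ ν.toFinset, (ν.count w).factorial
          = ν.count v * n.factorial := by
      intro v hv
      rw [hfiber v hv, hprod v hv, mul_left_comm]
      rw [ih (ν.erase v) (by rw [Multiset.card_erase_of_mem (Multiset.mem_toFinset.1 hv), hν]; rfl)]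
    rw [Finset.sum_congr rfl this, ← Finset.sum_mul, Multiset.toFinset_sum_count_eq, hν,
      Nat.factorial_succ]

lemma umbral_content_count {n : ℕ} (p : Fin n → ℕ) (i : ℕ) :
    content p i = (Multiset.map p Finset.univ.val).count i := by
  rw [content, Multiset.count_map, Finset.card, Finset.filter_val]
  congr 1
  exact Multiset.filter_congr (fun x _ => eq_comm)

lemma umbral_icc_val (n : ℕ) :
    (Finset.Icc 1 n).val = Multiset.map (fun i : Fin n => (i : ℕ) + 1) Finset.univ.val := by
  refine (Multiset.Nodup.ext (Finset.Icc 1 n).nodup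
    (Multiset.Nodup.map (fun a b h => Fin.ext (Nat.succ_injective h)) Finset.univ.nodup)).2 ?_
  intro v
  simp only [Finset.mem_val, Finset.mem_Icc, Multiset.mem_map, Finset.mem_univ_val]
  constructor
  · rintro h
    exact ⟨⟨v - 1, by omega⟩, Finset.mem_univ _, by simp; omega⟩
  · rintro ⟨i, -, rfl⟩
    exact ⟨by omega, by have := i.isLt; omega⟩

lemma umbral_decomp (n : ℕ) (ν : Multiset ℕ) (hsub : ν.toFinset ⊆ Finset.Icc 1 n) :
    Multiset.map ν.count (Finset.Icc 1 n).val
      = ν.toFinset.val.map ν.count + Multiset.replicate (n - ν.toFinset.card) 0 := by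
  have hle : ν.toFinset.val ≤ (Finset.Icc 1 n).val := Finset.val_le_iff.2 hsub
  have hval : (Finset.Icc 1 n).val = ν.toFinset.val + (Finset.Icc 1 n \ ν.toFinset).val := by
    rw [Finset.sdiff_val, add_tsub_cancel_of_le hle]
  rw [hval, Multiset.map_add]
  congr 1
  apply Multiset.eq_replicate.2
  constructor
  · rw [Multiset.card_map, ← Finset.card_def, Finset.card_sdiff_of_subset hsub, Nat.card_Icc]
    omega
  · intro b hb
    obtain ⟨v, hv, rfl⟩ := Multiset.mem_map.1 hb
    rw [Finset.mem_val, Finset.mem_sdiff] at hv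
    exact Multiset.count_eq_zero_of_notMem (fun hm => hv.2 (Multiset.mem_toFinset.2 hm))

lemma umbral_realize (n : ℕ) (ν : Multiset ℕ) (hν : Multiset.card ν = n) :
    ∃ p : Fin n → ℕ, Multiset.map p Finset.univ.val = ν := by
  induction ν using Quotient.inductionOn with
  | _ l =>
    simp only [Multiset.quot_mk_to_coe, Multiset.coe_card] at hν
    subst hν
    exact ⟨l.get, by rw [Fin.univ_val_map]; exact congrArg _ (List.ofFn_get l)⟩

/-- Map a multiset of card `n` to the partition of `n` given by its multiplicities. -/
def toPart (n : ℕ) (ν : Multiset ℕ) : Nat.Partition n :=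
  if h : Multiset.card ν = n then
    { parts := ν.toFinset.val.map ν.count
      parts_pos := by
        intro i hi
        obtain ⟨v, hv, rfl⟩ := Multiset.mem_map.1 hi
        exact Multiset.count_pos.2 (Multiset.mem_toFinset.1 (Finset.mem_val.mp hv))
      parts_sum := by
        have h2 : (ν.toFinset.val.map ν.count).sum = ∑ a ∈ ν.toFinset, ν.count a := rfl
        rw [h2, Multiset.toFinset_sum_count_eq, h] }
  else
    { parts := Multiset.replicate n 1
      parts_pos := by
        intro i hi
        rw [Multiset.eq_of_mem_replicate hi]
        exact one_pos
      parts_sum := by simp [Multiset.sum_replicate] }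

lemma umbral_toPart_parts (n : ℕ) (ν : Multiset ℕ) (h : Multiset.card ν = n) :
    (toPart n ν).parts = ν.toFinset.val.map ν.count := by
  rw [toPart, dif_pos h]

lemma umbral_cancel_zeros (s t : Multiset ℕ) (k m : ℕ) (hs : ∀ x ∈ s, x ≠ 0)
    (ht : ∀ x ∈ t, x ≠ 0)
    (h : s + Multiset.replicate k 0 = t + Multiset.replicate m 0) : s = t := by
  have hrep : ∀ j : ℕ, Multiset.filter (· ≠ 0) (Multiset.replicate j (0:ℕ)) = 0 :=
    fun j => Multiset.filter_eq_nil.2 (fun a ha => by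
      simp [Multiset.eq_of_mem_replicate ha])
  have := congrArg (Multiset.filter (· ≠ 0)) h
  rwa [Multiset.filter_add, Multiset.filter_add, hrep, hrep,
    Multiset.filter_eq_self.2 hs, Multiset.filter_eq_self.2 ht, add_zero, add_zero] at this

lemma umbral_card_le_sum (s : Multiset ℕ) (h : ∀ x ∈ s, 0 < x) :
    Multiset.card s ≤ s.sum := by
  induction s using Multiset.induction with
  | empty => simp
  | cons a s ih2 =>
    simp only [Multiset.card_cons, Multiset.sum_cons]
    have h1 := h a (Multiset.mem_cons_self a s)
    have h2 := ih2 (fun x hx => h x (Multiset.mem_cons_of_mem hx))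
    omega

end Aux

lemma umbral_memT (n : ℕ) (ν : Multiset ℕ)
    (hν : ν ∈ (Fintype.piFinset fun _ : Fin n => Finset.Icc 1 n).image
      (fun p => Multiset.map p Finset.univ.val)) :
    Multiset.card ν = n ∧ ν.toFinset ⊆ Finset.Icc 1 n := by
  obtain ⟨p, hp, rfl⟩ := Finset.mem_image.1 hν
  refine ⟨by simp, fun v hv => ?_⟩
  rw [Multiset.mem_toFinset] at hv
  obtain ⟨j, _, rfl⟩ := Multiset.mem_map.1 hv
  exact Fintype.mem_piFinset.1 hp j

lemma umbral_fib1_card (n : ℕ) (ν : Multiset ℕ) (hcard : Multiset.card ν = n)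
    (hsub : ν.toFinset ⊆ Finset.Icc 1 n) :
    ((Fintype.piFinset fun _ : Fin n => Finset.Icc 1 n).filter
        (fun p => Multiset.map p Finset.univ.val = ν)).card
      * partsFact (ν.toFinset.val.map ν.count) = n.factorial := by
  have hfilter :
      (Fintype.piFinset fun _ : Fin n => Finset.Icc 1 n).filter
        (fun p => Multiset.map p Finset.univ.val = ν)
      = (Fintype.piFinset fun _ : Fin n => ν.toFinset).filter
        (fun p => Multiset.map p Finset.univ.val = ν) := by
    ext p
    simp only [Finset.mem_filter, Fintype.mem_piFinset]
    constructor
    · rintro ⟨h1, h2⟩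
      refine ⟨fun i => ?_, h2⟩
      rw [Multiset.mem_toFinset, ← h2]
      exact Multiset.mem_map_of_mem _ (Finset.mem_univ_val _)
    · rintro ⟨h1, h2⟩
      exact ⟨fun i => hsub (h1 i), h2⟩
  have hpf : partsFact (ν.toFinset.val.map ν.count) = ∏ v ∈ ν.toFinset, (ν.count v).factorial := by
    rw [partsFact, Multiset.map_map]
    rfl
  rw [hfilter, hpf]
  exact umbral_core n ν hcard

lemma umbral_prod_a {R : Type*} [CommRing R] (a : ℕ → R) (ha : a 0 = 1) (n : ℕ)
    (ν : Multiset ℕ) (hsub : ν.toFinset ⊆ Finset.Icc 1 n) :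
    ∏ i ∈ Finset.Icc 1 n, a (ν.count i) = ((ν.toFinset.val.map ν.count).map a).prod := by
  have h1 : ∏ i ∈ Finset.Icc 1 n, a (ν.count i)
      = ((Multiset.map ν.count (Finset.Icc 1 n).val).map a).prod := by
    rw [Multiset.map_map]
    rfl
  rw [h1, umbral_decomp n ν hsub, Multiset.map_add, Multiset.prod_add, Multiset.map_replicate,
    Multiset.prod_replicate, ha, one_pow, mul_one]

lemma umbral_fiber_card (n : ℕ) (μ : Nat.Partition n) :
    (((Fintype.piFinset fun _ : Fin n => Finset.Icc 1 n).image
        (fun p => Multiset.map p Finset.univ.val)).filter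
          (fun ν => toPart n ν = μ)).card * multFact μ.parts
      = n.descFactorial μ.parts.card := by
  classical
  have hl : μ.parts.card ≤ n := by
    have := umbral_card_le_sum μ.parts (fun x hx => μ.parts_pos hx)
    rwa [μ.parts_sum] at this
  set k := n - μ.parts.card with hk
  set ν' : Multiset ℕ := μ.parts + Multiset.replicate k 0 with hν'def
  have hν'card : Multiset.card ν' = n := by
    rw [hν'def, Multiset.card_add, Multiset.card_replicate]
    omega
  have hz : ∀ x ∈ μ.parts, x ≠ 0 := fun x hx => (μ.parts_pos hx).ne'
  have hbij : (((Fintype.piFinset fun _ : Fin n => Finset.Icc 1 n).image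
        (fun p => Multiset.map p Finset.univ.val)).filter (fun ν => toPart n ν = μ)).card
      = ((Fintype.piFinset fun _ : Fin n => ν'.toFinset).filter
          (fun f => Multiset.map f Finset.univ.val = ν')).card := by
    apply Finset.card_bij (fun ν _ => fun i : Fin n => ν.count ((i : ℕ) + 1))
    · intro ν hν
      rw [Finset.mem_filter] at hν
      obtain ⟨hcard, hsub⟩ := umbral_memT n ν hν.1
      have hparts : μ.parts = ν.toFinset.val.map ν.count := by
        rw [← hν.2, umbral_toPart_parts n ν hcard]
      have hcardtf : ν.toFinset.card = μ.parts.card := by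
        rw [hparts, Multiset.card_map, Finset.card_def]
      have hmap : Multiset.map (fun i : Fin n => ν.count ((i:ℕ)+1)) Finset.univ.val = ν' := by
        have h1 : Multiset.map (fun i : Fin n => ν.count ((i:ℕ)+1)) Finset.univ.val
            = Multiset.map ν.count (Finset.Icc 1 n).val := by
          rw [umbral_icc_val, Multiset.map_map]
          rfl
        rw [h1, umbral_decomp n ν hsub, ← hparts, hcardtf, hν'def]
      rw [Finset.mem_filter]
      exact ⟨Fintype.mem_piFinset.2 (fun i => Multiset.mem_toFinset.2
        (hmap ▸ Multiset.mem_map_of_mem _ (Finset.mem_univ_val _))), hmap⟩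
    · intro ν₁ h₁ ν₂ h₂ heq
      rw [Finset.mem_filter] at h₁ h₂
      obtain ⟨hc₁, hs₁⟩ := umbral_memT n ν₁ h₁.1
      obtain ⟨hc₂, hs₂⟩ := umbral_memT n ν₂ h₂.1
      refine Multiset.ext.2 (fun v => ?_)
      by_cases hv : v ∈ Finset.Icc 1 n
      · rw [Finset.mem_Icc] at hv
        have := congrFun heq ⟨v - 1, by omega⟩
        simpa [show v - 1 + 1 = v by omega] using this
      · rw [Multiset.count_eq_zero_of_notMem, Multiset.count_eq_zero_of_notMem]
        · exact fun hm => hv (hs₂ (Multiset.mem_toFinset.2 hm))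
        · exact fun hm => hv (hs₁ (Multiset.mem_toFinset.2 hm))
    · intro h hh
      rw [Finset.mem_filter] at hh
      obtain ⟨hpi, hms⟩ := hh
      set ν : Multiset ℕ :=
        Finset.univ.val.bind (fun i : Fin n => Multiset.replicate (h i) ((i:ℕ)+1)) with hνdef
      have hcnt : ∀ i : Fin n, ν.count ((i:ℕ)+1) = h i := by
        intro i
        rw [hνdef, Multiset.count_bind]
        have h2 : Multiset.map
              (fun j : Fin n => Multiset.count ((i:ℕ)+1) (Multiset.replicate (h j) ((j:ℕ)+1)))
              Finset.univ.val
            = Multiset.map (fun j : Fin n => if j = i then h j else 0) Finset.univ.val := by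
          apply Multiset.map_congr rfl
          intro j _
          rw [Multiset.count_replicate]
          by_cases hji : j = i
          · subst hji; simp
          · have hne : ¬((j:ℕ)+1 = (i:ℕ)+1) := fun hc => hji (Fin.ext (by omega))
            simp [hne, hji, Fin.val_inj]
        rw [h2]
        have h3 : (Multiset.map (fun j : Fin n => if j = i then h j else 0) Finset.univ.val).sum
            = ∑ j : Fin n, if j = i then h j else 0 := rfl
        rw [h3, Finset.sum_ite_eq' Finset.univ i h]
        simp
      have hsubν : ν.toFinset ⊆ Finset.Icc 1 n := by
        intro v hv
        rw [Multiset.mem_toFinset, hνdef] at hv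
        obtain ⟨j, _, hj⟩ := Multiset.mem_bind.1 hv
        rw [Multiset.eq_of_mem_replicate hj, Finset.mem_Icc]
        have := j.isLt
        omega
      have hνmsIcc : Multiset.map ν.count (Finset.Icc 1 n).val = ν' := by
        rw [umbral_icc_val, Multiset.map_map]
        rw [show (ν.count ∘ fun i : Fin n => (i:ℕ)+1) = h from funext hcnt]
        exact hms
      have hcard : Multiset.card ν = n := by
        have hc1 : Multiset.card ν = ∑ j : Fin n, h j := by
          rw [hνdef, Multiset.card_bind]
          have : (Multiset.card ∘ fun i : Fin n => Multiset.replicate (h i) ((i:ℕ) + 1))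
              = h := funext fun i => Multiset.card_replicate _ _
          rw [this]
          rfl
        have hc2 : (∑ j : Fin n, h j) = ν'.sum := by
          rw [← hms]
          rfl
        have hc3 : ν'.sum = n := by
          rw [hν'def, Multiset.sum_add, μ.parts_sum, Multiset.sum_replicate]
          simp
        omega
      have hmemTν : ν ∈ (Fintype.piFinset fun _ : Fin n => Finset.Icc 1 n).image
          (fun p => Multiset.map p Finset.univ.val) := by
        obtain ⟨p, hp⟩ := umbral_realize n ν hcard
        refine Finset.mem_image.2 ⟨p, Fintype.mem_piFinset.2 (fun i => ?_), hp⟩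
        apply hsubν
        rw [Multiset.mem_toFinset, ← hp]
        exact Multiset.mem_map_of_mem _ (Finset.mem_univ_val _)
      have htoPart : toPart n ν = μ := by
        apply Nat.Partition.ext
        rw [umbral_toPart_parts n ν hcard]
        have hdec := umbral_decomp n ν hsubν
        rw [hνmsIcc] at hdec
        have hcnt0 : ∀ x ∈ ν.toFinset.val.map ν.count, x ≠ 0 := by
          intro x hx
          obtain ⟨v, hv, rfl⟩ := Multiset.mem_map.1 hx
          exact (Multiset.count_pos.2 (Multiset.mem_toFinset.1 (Finset.mem_val.mp hv))).ne'
        exact (umbral_cancel_zeros μ.parts (ν.toFinset.val.map ν.count) k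
          (n - ν.toFinset.card) hz hcnt0 (hν'def.symm.trans hdec)).symm
      exact ⟨ν, Finset.mem_filter.2 ⟨hmemTν, htoPart⟩, funext hcnt⟩
  rw [hbij]
  have hcore := umbral_core n ν' hν'card
  have hprodν' : (∏ v ∈ ν'.toFinset, (ν'.count v).factorial)
      = multFact μ.parts * k.factorial := by
    rcases Nat.eq_zero_or_pos k with hk0 | hkpos
    · rw [hν'def, hk0]
      simp [multFact]
    · have h0m : (0:ℕ) ∉ μ.parts.toFinset := by
        rw [Multiset.mem_toFinset]
        exact fun h => (hz 0 h) rfl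
      have htf : ν'.toFinset = μ.parts.toFinset ∪ {0} := by
        rw [hν'def, Multiset.toFinset_add, Multiset.toFinset_replicate,
          if_neg (Nat.pos_iff_ne_zero.1 hkpos)]
      rw [htf, Finset.prod_union (Finset.disjoint_singleton_right.2 h0m), Finset.prod_singleton]
      have hc0 : ν'.count 0 = k := by
        rw [hν'def, Multiset.count_add, Multiset.count_replicate, if_pos rfl,
          Multiset.count_eq_zero_of_notMem (fun h => hz 0 h rfl), zero_add]
      rw [hc0]
      congr 1
      rw [multFact]
      apply Finset.prod_congr rfl
      intro v hv
      rw [Multiset.mem_toFinset] at hv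
      rw [hν'def, Multiset.count_add, Multiset.count_replicate,
        if_neg (fun h0 => hz v hv h0.symm), add_zero]
  rw [hprodν'] at hcore
  have hfd := Nat.factorial_mul_descFactorial hl
  apply Nat.eq_of_mul_eq_mul_right (Nat.factorial_pos k)
  calc ((Fintype.piFinset fun _ : Fin n => ν'.toFinset).filter
          (fun f => Multiset.map f Finset.univ.val = ν')).card * multFact μ.parts * k.factorial
      = ((Fintype.piFinset fun _ : Fin n => ν'.toFinset).filter
          (fun f => Multiset.map f Finset.univ.val = ν')).card
          * (multFact μ.parts * k.factorial) := by ring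
    _ = n.factorial := hcore
    _ = (n - μ.parts.card).factorial * n.descFactorial μ.parts.card := hfd.symm
    _ = n.descFactorial μ.parts.card * k.factorial := by rw [hk]; ring

/-- The umbral equivalence `n!·V_n^B(θ̄_1,…,θ̄_n) ≃ B_n(-1.θ̄, -1.θ̄)` for the type B
volume polynomial: for any sequence `a : ℕ → R` with `a 0 = 1`,
`Σ_{p : [n] → [n]} Π_{i=1}^n a(c_i(p)) = Σ_{μ ⊢ n} (n!·(n)_{ℓ(μ)}/(m(μ)!·μ!))·a_μ`,
the coefficients being nonnegative integers. -/
theorem typeB_volume_eq_abel {R : Type*} [CommRing R] (a : ℕ → R) (ha : a 0 = 1)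
    (n : ℕ) (hn : 1 ≤ n) :
    ∑ p ∈ Fintype.piFinset (fun _ : Fin n => Finset.Icc 1 n),
        ∏ i ∈ Finset.Icc 1 n, a (content p i) =
      ∑ μ : Nat.Partition n,
        (((n.factorial * n.descFactorial μ.parts.card) /
            (multFact μ.parts * partsFact μ.parts) : ℕ) : R) *
          (μ.parts.map a).prod := by
  classical
  rw [← Finset.sum_fiberwise_of_maps_to
      (g := fun p : Fin n → ℕ => Multiset.map p Finset.univ.val)
      (t := (Fintype.piFinset fun _ : Fin n => Finset.Icc 1 n).image
        (fun p => Multiset.map p Finset.univ.val))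
      (fun p hp => Finset.mem_image_of_mem _ hp)
      (fun p => ∏ i ∈ Finset.Icc 1 n, a (content p i))]
  rw [← Finset.sum_fiberwise_of_maps_to
      (g := fun ν : Multiset ℕ => toPart n ν)
      (t := (Finset.univ : Finset (Nat.Partition n)))
      (fun ν _ => Finset.mem_univ _)
      (fun ν => ∑ p ∈ (Fintype.piFinset fun _ : Fin n => Finset.Icc 1 n).filter
          (fun p => Multiset.map p Finset.univ.val = ν),
        ∏ i ∈ Finset.Icc 1 n, a (content p i))]
  apply Finset.sum_congr rfl
  intro μ _
  -- notation
  set T := (Fintype.piFinset fun _ : Fin n => Finset.Icc 1 n).image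
      (fun p => Multiset.map p Finset.univ.val) with hT
  set fib := T.filter (fun ν => toPart n ν = μ) with hfib
  -- per ν rewriting of the inner sum
  have hinner : ∀ ν ∈ fib,
      (∑ p ∈ (Fintype.piFinset fun _ : Fin n => Finset.Icc 1 n).filter
          (fun p => Multiset.map p Finset.univ.val = ν),
        ∏ i ∈ Finset.Icc 1 n, a (content p i))
      = (((Fintype.piFinset fun _ : Fin n => Finset.Icc 1 n).filter
          (fun p => Multiset.map p Finset.univ.val = ν)).card : R)
        * (μ.parts.map a).prod := by
    intro ν hν
    rw [hfib, Finset.mem_filter] at hν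
    obtain ⟨hcard, hsub⟩ := umbral_memT n ν hν.1
    have hparts : μ.parts = ν.toFinset.val.map ν.count := by
      rw [← hν.2, umbral_toPart_parts n ν hcard]
    have hstep : ∀ p ∈ (Fintype.piFinset fun _ : Fin n => Finset.Icc 1 n).filter
          (fun p => Multiset.map p Finset.univ.val = ν),
        ∏ i ∈ Finset.Icc 1 n, a (content p i) = (μ.parts.map a).prod := by
      intro p hp
      have hms : Multiset.map p Finset.univ.val = ν := (Finset.mem_filter.1 hp).2
      have h1 : ∏ i ∈ Finset.Icc 1 n, a (content p i)
          = ∏ i ∈ Finset.Icc 1 n, a (ν.count i) :=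
        Finset.prod_congr rfl (fun i _ => by rw [umbral_content_count, hms])
      rw [h1, umbral_prod_a a ha n ν hsub, ← hparts]
    rw [Finset.sum_congr rfl hstep, Finset.sum_const, nsmul_eq_mul]
  rw [Finset.sum_congr rfl hinner, ← Finset.sum_mul, ← Nat.cast_sum]
  congr 1
  -- it remains to identify the natural number coefficient
  have hmf : 0 < multFact μ.parts :=
    Finset.prod_pos (fun i _ => Nat.factorial_pos _)
  have hpf : 0 < partsFact μ.parts := by
    rw [partsFact]
    refine Multiset.prod_pos (fun x hx => ?_)
    obtain ⟨y, _, rfl⟩ := Multiset.mem_map.1 hx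
    exact Nat.factorial_pos y
  have hS : (∑ ν ∈ fib, ((Fintype.piFinset fun _ : Fin n => Finset.Icc 1 n).filter
        (fun p => Multiset.map p Finset.univ.val = ν)).card) * partsFact μ.parts
      = fib.card * n.factorial := by
    rw [Finset.sum_mul]
    rw [Finset.sum_congr rfl (fun ν hν => ?_), Finset.sum_const, smul_eq_mul]
    rw [hfib, Finset.mem_filter] at hν
    obtain ⟨hcard, hsub⟩ := umbral_memT n ν hν.1
    have hparts : μ.parts = ν.toFinset.val.map ν.count := by
      rw [← hν.2, umbral_toPart_parts n ν hcard]
    rw [hparts]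
    exact umbral_fib1_card n ν hcard hsub
  have hK : fib.card * multFact μ.parts = n.descFactorial μ.parts.card :=
    umbral_fiber_card n μ
  apply congrArg Nat.cast
  symm
  apply Nat.div_eq_of_eq_mul_left (Nat.mul_pos hmf hpf)
  calc n.factorial * n.descFactorial μ.parts.card
      = (fib.card * multFact μ.parts) * n.factorial := by rw [hK]; ring
    _ = (fib.card * n.factorial) * multFact μ.parts := by ring
    _ = ((∑ ν ∈ fib, ((Fintype.piFinset fun _ : Fin n => Finset.Icc 1 n).filter
          (fun p => Multiset.map p Finset.univ.val = ν)).card) * partsFact μ.parts)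
          * multFact μ.parts := by rw [hS]
    _ = (∑ ν ∈ fib, ((Fintype.piFinset fun _ : Fin n => Finset.Icc 1 n).filter
          (fun p => Multiset.map p Finset.univ.val = ν)).card)
          * (multFact μ.parts * partsFact μ.parts) := by ring
end
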